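/- arXiv:1910.00788 — 7 statements merged into one kernel-verified Lean document; each statement's English description precedes it below -/
import Mathlib

section
/- Let r ≥ 1, T ≥ 0, and let P ⊆ [Δ]^d be a finite point set with weights w : P → ℝ_{≥0} such that Σ_{p∈P} w(p) ≥ 0.9T and dist(p,q) ≤ √d·g for all p,q ∈ P, for some g ≥ 0. Let Z = {z_1,…,z_k} ⊆ [Δ]^d with |Z| = k, let 𝓗 be a set of assignment half-spaces corresponding to Z, and let B = (b_0,…,b_k) satisfy the admissibility condition of the transferred-assignment definition for some ξ ∈ (0, 1/(100k)). If 𝓗 is valid for P, then, writing π : P → Z for the assignment corresponding to 𝓗 and π' : P → Z for the transferred assignment corresponding to (𝓗,B,ξ,T), one has cost^{(r)}(π') ≤ (1 + 2^{r+4}k²ξ)·cost^{(r)}(π) + ξ·2^{r+1}·k·T·(√d·g)^r and ‖s(π') − s(π)‖₁ ≤ 16kξ·Σ_{p∈P} w(p). -/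
open scoped ENNReal Classical

noncomputable section

/-- Points of `ℝ^d` with the Euclidean metric. -/
abbrev Pt (d : ℕ) := EuclideanSpace ℝ (Fin d)

/-- The grid `[Δ]^d = {1,…,Δ}^d`. -/
def gridSet (Δ d : ℕ) : Set (Pt d) :=
  {p | ∀ i : Fin d, ∃ m : ℕ, 1 ≤ m ∧ m ≤ Δ ∧ p i = m}

/-- `x` is smaller than `y` in the alphabetical (lexicographic) order. -/
def lexLt {d : ℕ} (x y : Pt d) : Prop :=
  ∃ i : Fin d, (∀ j : Fin d, j < i → x j = y j) ∧ x i < y i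

/-- The sorting order used for ℓ_r half-spaces w.r.t. the centers `z₁, z₂`:
compare `dist(·,z₁)^r − dist(·,z₂)^r`, breaking ties lexicographically. -/
def keyLt (r : ℝ) {d : ℕ} (z₁ z₂ : Pt d) (x y : Pt d) : Prop :=
  dist x z₁ ^ r - dist x z₂ ^ r < dist y z₁ ^ r - dist y z₂ ^ r ∨
    (dist x z₁ ^ r - dist x z₂ ^ r = dist y z₁ ^ r - dist y z₂ ^ r ∧ lexLt x y)

/-- `H` is an ℓ_r half-space corresponding to `(z₁, z₂, t)` for some `t ∈ [Δ^d]`,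
i.e. a nonempty initial segment of `[Δ]^d` w.r.t. the sorting order `keyLt`. -/
def IsHalfspace (r : ℝ) (Δ d : ℕ) (z₁ z₂ : Pt d) (H : Set (Pt d)) : Prop :=
  H ⊆ gridSet Δ d ∧ H.Nonempty ∧
    ∀ x ∈ gridSet Δ d, ∀ y ∈ H, keyLt r z₁ z₂ x y → x ∈ H

/-- A set of assignment half-spaces corresponding to centers `z : Fin k → Pt d`. -/
structure AssignHS (r : ℝ) (Δ d k : ℕ) (z : Fin k → Pt d) where
  H : Fin k → Fin k → Set (Pt d)
  isHalfspace : ∀ i j : Fin k, i < j → IsHalfspace r Δ d (z i) (z j) (H i j)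
  compl : ∀ i j : Fin k, j < i → H i j = gridSet Δ d \ H j i

/-- `𝓗` is valid for `P`: every `p ∈ P` has a unique `i` with `p ∈ H i j` for all `j ≠ i`. -/
def AssignHS.Valid {r : ℝ} {Δ d k : ℕ} {z : Fin k → Pt d} (𝓗 : AssignHS r Δ d k z)
    (P : Set (Pt d)) : Prop :=
  ∀ p ∈ P, ∃! i : Fin k, ∀ j : Fin k, j ≠ i → p ∈ 𝓗.H i j

/-- `π` is the assignment mapping of `P` corresponding to `𝓗` (indices of centers). -/
def AssignHS.Corresponds {r : ℝ} {Δ d k : ℕ} {z : Fin k → Pt d} (𝓗 : AssignHS r Δ d k z)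
    (P : Finset (Pt d)) (π : Pt d → Fin k) : Prop :=
  ∀ p ∈ P, ∀ j : Fin k, j ≠ π p → p ∈ 𝓗.H (π p) j

/-- The region `R_0` induced by `𝓗`. -/
def AssignHS.region0 {r : ℝ} {Δ d k : ℕ} {z : Fin k → Pt d} (𝓗 : AssignHS r Δ d k z) :
    Set (Pt d) :=
  {p ∈ gridSet Δ d | ∀ i : Fin k, ∃ j : Fin k, j ≠ i ∧ p ∉ 𝓗.H i j}

/-- The region `R_i` (for `i ∈ [k]`) induced by `𝓗`. -/
def AssignHS.region {r : ℝ} {Δ d k : ℕ} {z : Fin k → Pt d} (𝓗 : AssignHS r Δ d k z)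
    (i : Fin k) : Set (Pt d) :=
  {p ∈ gridSet Δ d | ∀ j : Fin k, j ≠ i → p ∈ 𝓗.H i j}

/-- Cost of an assignment `π` of the weighted point set `(P, w)` to the centers `z`. -/
def acost (r : ℝ) {d k : ℕ} (P : Finset (Pt d)) (w : Pt d → ℝ)
    (z : Fin k → Pt d) (π : Pt d → Fin k) : ℝ :=
  ∑ p ∈ P, w p * dist p (z (π p)) ^ r

/-- `i`-th entry of the size vector `s(π)`. -/
def asize {d k : ℕ} (P : Finset (Pt d)) (w : Pt d → ℝ) (π : Pt d → Fin k) (i : Fin k) : ℝ :=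
  ∑ p ∈ P, if π p = i then w p else 0

/-- Total weight of the points of `P` lying in the region `R`. -/
def regionWeight {d : ℕ} (P : Finset (Pt d)) (w : Pt d → ℝ) (R : Set (Pt d)) : ℝ :=
  ∑ p ∈ P, if p ∈ R then w p else 0

/-- The admissibility condition on an entry of `B`:
`v ∈ (1±ξ)·W` or `v ∈ W ± ξT` (open intervals). -/
def AdmVal (W v ξ T : ℝ) : Prop :=
  ((1 - ξ) * W < v ∧ v < (1 + ξ) * W) ∨ (W - ξ * T < v ∧ v < W + ξ * T)

/-- `π` is a transferred assignment mapping of `P` corresponding to `(𝓗, B, ξ, T)`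
with `i* = istar`: it maps `p` to `i` whenever `b i ≥ 2ξT` and `p ∈ R i`, and
to `istar` otherwise. -/
def IsTransferred {d k : ℕ} (R : Fin k → Set (Pt d)) (b : Fin k → ℝ) (ξ T : ℝ)
    (istar : Fin k) (P : Finset (Pt d)) (π : Pt d → Fin k) : Prop :=
  ∀ p ∈ P, (∀ i : Fin k, 2 * ξ * T ≤ b i → p ∈ R i → π p = i) ∧
    ((∀ i : Fin k, ¬(2 * ξ * T ≤ b i ∧ p ∈ R i)) → π p = istar)

end

lemma aux_add_rpow {a b r : ℝ} (ha : 0 ≤ a) (hb : 0 ≤ b) (hr : 1 ≤ r) :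
    (a + b) ^ r ≤ 2 ^ (r - 1) * (a ^ r + b ^ r) := by
  have h := NNReal.rpow_add_le_mul_rpow_add_rpow (⟨a, ha⟩ : NNReal) (⟨b, hb⟩ : NNReal) hr
  exact_mod_cast h

set_option maxHeartbeats 2000000 in
/-- **Lemma (Transferred assignment does not change the cost too much).**
If `𝓗` is valid for `P`, `π` is the assignment corresponding to `𝓗`, and `π'` is the
transferred assignment corresponding to `(𝓗, B, ξ, T)`, then
`cost(π') ≤ (1 + 2^(r+4) k² ξ)·cost(π) + ξ·2^(r+1)·k·T·(√d·g)^r` and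
`‖s(π') − s(π)‖₁ ≤ 16kξ·Σ_{p∈P} w(p)`. -/
theorem stmt4 (r : ℝ) (hr : 1 ≤ r) (Δ d k : ℕ) (hk : 1 ≤ k)
    (T g ξ : ℝ) (hT : 0 ≤ T) (hg : 0 ≤ g) (hξ0 : 0 < ξ) (hξk : ξ < 1 / (100 * k))
    (P : Finset (Pt d)) (hPgrid : ↑P ⊆ gridSet Δ d)
    (w : Pt d → ℝ) (hw : ∀ p ∈ P, 0 ≤ w p) (hwT : 0.9 * T ≤ ∑ p ∈ P, w p)
    (hdiam : ∀ p ∈ P, ∀ q ∈ P, dist p q ≤ Real.sqrt d * g)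
    (z : Fin k → Pt d) (hzinj : Function.Injective z) (hzgrid : ∀ i, z i ∈ gridSet Δ d)
    (𝓗 : AssignHS r Δ d k z)
    (b0 : ℝ) (b : Fin k → ℝ) (hb0 : 0 ≤ b0) (hb : ∀ i, 0 ≤ b i)
    (hadm0 : AdmVal (regionWeight P w 𝓗.region0) b0 ξ T)
    (hadm : ∀ i : Fin k, AdmVal (regionWeight P w (𝓗.region i)) (b i) ξ T)
    (hvalid : 𝓗.Valid ↑P)
    (π : Pt d → Fin k) (hπ : 𝓗.Corresponds P π)
    (istar : Fin k) (histar : ∀ i, b i ≤ b istar)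
    (π' : Pt d → Fin k) (hπ' : IsTransferred 𝓗.region b ξ T istar P π') :
    acost r P w z π' ≤ (1 + (2:ℝ) ^ (r + 4) * k ^ 2 * ξ) * acost r P w z π
        + ξ * (2:ℝ) ^ (r + 1) * k * T * (Real.sqrt d * g) ^ r ∧
      ∑ i : Fin k, |asize P w π' i - asize P w π i| ≤ 16 * k * ξ * ∑ p ∈ P, w p := by
  classical
  have hk1 : (1:ℝ) ≤ (k:ℝ) := by exact_mod_cast hk
  have hkpos : (0:ℝ) < k := by linarith
  have hkξ : (k:ℝ) * ξ < 1/100 := by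
    rw [lt_div_iff₀ (by positivity)] at hξk
    linarith
  have hξ100 : ξ ≤ 1/100 := by
    have := mul_le_mul_of_nonneg_right hk1 hξ0.le
    linarith
  have hr0 : (0:ℝ) ≤ r := by linarith
  set totw := ∑ p ∈ P, w p with htotwdef
  have htotw0 : 0 ≤ totw := Finset.sum_nonneg hw
  -- region ↔ fiber of π
  have hreg : ∀ p ∈ P, ∀ i : Fin k, p ∈ 𝓗.region i ↔ π p = i := by
    intro p hp i
    constructor
    · intro hmem
      obtain ⟨hgrid, hH⟩ := hmem
      obtain ⟨i₀, hi₀, huniq⟩ := hvalid p hp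
      have h1 : i = i₀ := huniq i hH
      have h2 : π p = i₀ := huniq (π p) (fun j hj => hπ p hp j hj)
      rw [h1.symm] at h2; exact h2
    · rintro rfl
      exact ⟨hPgrid hp, fun j hj => hπ p hp j hj⟩
  have hπ'eq : ∀ p ∈ P, π' p = if b (π p) < 2*ξ*T then istar else π p := by
    intro p hp
    obtain ⟨h1, h2⟩ := hπ' p hp
    by_cases hc : b (π p) < 2*ξ*T
    · rw [if_pos hc]
      apply h2
      rintro i ⟨hbi, hri⟩
      rw [← (hreg p hp i).mp hri] at hbi
      exact absurd hbi (not_le.mpr hc)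
    · rw [if_neg hc]
      exact h1 (π p) (not_lt.mp hc) ((hreg p hp (π p)).mpr rfl)
  have hW : ∀ i, regionWeight P w (𝓗.region i) = asize P w π i := by
    intro i
    unfold regionWeight asize
    exact Finset.sum_congr rfl fun p hp => if_congr (hreg p hp i) rfl rfl
  have hadm' : ∀ i, AdmVal (asize P w π i) (b i) ξ T := fun i => hW i ▸ hadm i
  have hA0 : ∀ i, 0 ≤ asize P w π i := fun i =>
    Finset.sum_nonneg fun p hp => by by_cases h : π p = i <;> simp [h, hw p hp]
  have hsum_asize : ∑ i : Fin k, asize P w π i = totw := by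
    unfold asize
    rw [Finset.sum_comm]
    refine Finset.sum_congr rfl fun p _ => ?_
    simp [Finset.sum_ite_eq]
  have hsmall : ∀ i, b i < 2*ξ*T → asize P w π i < 3*ξ*T := by
    intro i hbi
    have hWi := hA0 i
    rcases hadm' i with ⟨h1, h2⟩ | ⟨h1, h2⟩
    · linarith [mul_le_mul_of_nonneg_right hξ100 hWi, mul_nonneg hξ0.le hT]
    · linarith [mul_nonneg hξ0.le hT]
  set wQ := ∑ p ∈ P, (if b (π p) < 2*ξ*T then w p else 0) with hwQdef
  have hwQ0 : 0 ≤ wQ :=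
    Finset.sum_nonneg fun p hp => by by_cases h : b (π p) < 2*ξ*T <;> simp [h, hw p hp]
  have hwQ : wQ ≤ 3*k*ξ*T := by
    have step : wQ = ∑ i : Fin k, (if b i < 2*ξ*T then asize P w π i else 0) := by
      have h0 : ∀ p, (if b (π p) < 2*ξ*T then w p else 0)
          = ∑ i : Fin k, (if π p = i then (if b i < 2*ξ*T then w p else 0) else 0) := by
        intro p
        rw [Finset.sum_ite_eq]
        simp
      calc wQ = ∑ p ∈ P, ∑ i : Fin k, (if π p = i then (if b i < 2*ξ*T then w p else 0) else 0) :=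
            Finset.sum_congr rfl fun p _ => h0 p
        _ = ∑ i : Fin k, ∑ p ∈ P, (if π p = i then (if b i < 2*ξ*T then w p else 0) else 0) :=
            Finset.sum_comm
        _ = ∑ i : Fin k, (if b i < 2*ξ*T then asize P w π i else 0) := by
            refine Finset.sum_congr rfl fun i _ => ?_
            by_cases hc : b i < 2*ξ*T
            · simp only [if_pos hc]; rfl
            · simp [if_neg hc]
    rw [step]
    have h1 : ∑ i : Fin k, (if b i < 2*ξ*T then asize P w π i else 0) ≤ ∑ _i : Fin k, 3*ξ*T :=
      Finset.sum_le_sum fun i _ => by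
        by_cases hc : b i < 2*ξ*T
        · rw [if_pos hc]; exact (hsmall i hc).le
        · rw [if_neg hc]; positivity
    rw [Finset.sum_const, Finset.card_univ, Fintype.card_fin, nsmul_eq_mul] at h1
    linarith [h1]
  -- size bound
  have hsize2 : ∑ i : Fin k, |asize P w π' i - asize P w π i| ≤ 2 * wQ := by
    have key : ∀ i : Fin k, |asize P w π' i - asize P w π i| ≤
        ∑ p ∈ P, (if b (π p) < 2*ξ*T then
          ((if π' p = i then w p else 0) + (if π p = i then w p else 0)) else 0) := by
      intro i
      unfold asize
      rw [← Finset.sum_sub_distrib]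
      refine (Finset.abs_sum_le_sum_abs _ _).trans (Finset.sum_le_sum fun p hp => ?_)
      by_cases hc : b (π p) < 2*ξ*T
      · rw [if_pos hc]
        refine (abs_sub _ _).trans ?_
        have e1 : |if π' p = i then w p else 0| = (if π' p = i then w p else 0) :=
          abs_of_nonneg (by by_cases h : π' p = i <;> simp [h, hw p hp])
        have e2 : |if π p = i then w p else 0| = (if π p = i then w p else 0) :=
          abs_of_nonneg (by by_cases h : π p = i <;> simp [h, hw p hp])
        rw [e1, e2]
      · have hpp : π' p = π p := by rw [hπ'eq p hp, if_neg hc]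
        rw [if_neg hc, hpp, sub_self, abs_zero]
    calc ∑ i : Fin k, |asize P w π' i - asize P w π i|
        ≤ ∑ i : Fin k, ∑ p ∈ P, (if b (π p) < 2*ξ*T then
          ((if π' p = i then w p else 0) + (if π p = i then w p else 0)) else 0) :=
          Finset.sum_le_sum fun i _ => key i
      _ = ∑ p ∈ P, ∑ i : Fin k, (if b (π p) < 2*ξ*T then
          ((if π' p = i then w p else 0) + (if π p = i then w p else 0)) else 0) :=
          Finset.sum_comm
      _ = ∑ p ∈ P, (if b (π p) < 2*ξ*T then 2 * w p else 0) := by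
          refine Finset.sum_congr rfl fun p _ => ?_
          by_cases hc : b (π p) < 2*ξ*T
          · simp only [if_pos hc]
            rw [Finset.sum_add_distrib, Finset.sum_ite_eq, Finset.sum_ite_eq]
            simp; ring
          · simp [if_neg hc]
      _ = 2 * wQ := by
          rw [hwQdef, Finset.mul_sum]
          exact Finset.sum_congr rfl fun p _ => by split <;> ring
  have hsizegoal : ∑ i : Fin k, |asize P w π' i - asize P w π i| ≤ 16 * k * ξ * totw := by
    refine hsize2.trans ?_
    linarith [mul_le_mul_of_nonneg_left (show (6:ℝ)*T ≤ 16*totw by linarith)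
      (mul_nonneg hkpos.le hξ0.le)]
  refine ⟨?_, hsizegoal⟩
  -- cost bound
  have hacost0 : 0 ≤ acost r P w z π :=
    Finset.sum_nonneg fun p hp => mul_nonneg (hw p hp) (Real.rpow_nonneg dist_nonneg r)
  set G := (Real.sqrt d * g) ^ r with hGdef
  have hG : 0 ≤ G := Real.rpow_nonneg (mul_nonneg (Real.sqrt_nonneg _) hg) r
  set c1 := (2:ℝ) ^ (r - 1) with hc1def
  have hc1 : 0 < c1 := Real.rpow_pos_of_pos (by norm_num) _
  have h25 : (2:ℝ) ^ (5:ℝ) = 32 := by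
    rw [show (5:ℝ) = ((5:ℕ):ℝ) by norm_num, Real.rpow_natCast]; norm_num
  have h22 : (2:ℝ) ^ (2:ℝ) = 4 := by
    rw [show (2:ℝ) = ((2:ℕ):ℝ) by norm_num, Real.rpow_natCast]; norm_num
  have h24 : (2:ℝ) ^ (r + 4) = 32 * c1 := by
    rw [show r + 4 = (r-1) + 5 by ring, Real.rpow_add (by norm_num : (0:ℝ) < 2), h25, hc1def]
    ring
  have h21 : (2:ℝ) ^ (r + 1) = 4 * c1 := by
    rw [show r + 1 = (r-1) + 2 by ring, Real.rpow_add (by norm_num : (0:ℝ) < 2), h22, hc1def]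
    ring
  by_cases hQ : ∀ p ∈ P, ¬ (b (π p) < 2*ξ*T)
  · have hceq : acost r P w z π' = acost r P w z π :=
      Finset.sum_congr rfl fun p hp => by rw [hπ'eq p hp, if_neg (hQ p hp)]
    rw [hceq]
    have e1 : 0 ≤ (2:ℝ)^(r+4) * k^2 * ξ := by rw [h24]; positivity
    have e2 : 0 ≤ ξ * (2:ℝ)^(r+1) * k * T * G := by
      rw [h21]
      refine mul_nonneg (mul_nonneg (mul_nonneg (mul_nonneg hξ0.le (by positivity))
        (Nat.cast_nonneg k)) hT) hG
    linarith [mul_nonneg e1 hacost0]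
  · push_neg at hQ
    obtain ⟨p₀, hp₀, hbp₀⟩ := hQ
    have hTpos : 0 < T := by
      by_contra h
      push_neg at h
      have h2 : ξ * T ≤ 0 := mul_nonpos_of_nonneg_of_nonpos hξ0.le h
      linarith [hb (π p₀)]
    -- istar is big
    have hbistar : 2*ξ*T ≤ b istar := by
      by_contra hcon
      push_neg at hcon
      have hall : ∀ i : Fin k, asize P w π i < 3*ξ*T :=
        fun i => hsmall i (lt_of_le_of_lt (histar i) hcon)
      have hne : (Finset.univ : Finset (Fin k)).Nonempty := ⟨istar, Finset.mem_univ _⟩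
      have hlt : totw < k * (3*ξ*T) := by
        rw [← hsum_asize]
        calc ∑ i : Fin k, asize P w π i < ∑ _i : Fin k, 3*ξ*T :=
              Finset.sum_lt_sum_of_nonempty hne fun i _ => hall i
          _ = k * (3*ξ*T) := by
              rw [Finset.sum_const, Finset.card_univ, Fintype.card_fin, nsmul_eq_mul]
      linarith [mul_lt_mul_of_pos_right hkξ hTpos]
    have hkb : 0.88*T ≤ k * b istar := by
      have hlb : ∀ i : Fin k, (1-ξ) * asize P w π i - ξ*T ≤ b i := by
        intro i
        rcases hadm' i with ⟨h1, _⟩ | ⟨h1, _⟩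
        · linarith [mul_nonneg hξ0.le hT]
        · linarith [mul_nonneg hξ0.le (hA0 i)]
      have hsum1 : ∑ i : Fin k, ((1-ξ) * asize P w π i - ξ*T) ≤ ∑ i : Fin k, b i :=
        Finset.sum_le_sum fun i _ => hlb i
      have hsum2 : ∑ i : Fin k, b i ≤ k * b istar := by
        calc ∑ i : Fin k, b i ≤ ∑ _i : Fin k, b istar := Finset.sum_le_sum fun i _ => histar i
          _ = k * b istar := by
              rw [Finset.sum_const, Finset.card_univ, Fintype.card_fin, nsmul_eq_mul]
      have hsum3 : ∑ i : Fin k, ((1-ξ) * asize P w π i - ξ*T) = (1-ξ) * totw - k * (ξ*T) := by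
        rw [Finset.sum_sub_distrib, ← Finset.mul_sum, hsum_asize, Finset.sum_const,
          Finset.card_univ, Fintype.card_fin, nsmul_eq_mul]
      rw [hsum3] at hsum1
      linarith [mul_le_mul_of_nonneg_left hwT (show (0:ℝ) ≤ 1-ξ by linarith),
        mul_lt_mul_of_pos_right hkξ hTpos,
        mul_le_mul_of_nonneg_right hξ100 hT]
    set WI := asize P w π istar with hWIdef
    have hWI0 : 0 ≤ WI := hA0 istar
    have hkWI : 0.87*T ≤ k * WI := by
      rcases hadm' istar with ⟨_, h2⟩ | ⟨_, h2⟩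
      · have A := mul_le_mul_of_nonneg_left h2.le hkpos.le
        have B := mul_le_mul_of_nonneg_right hkξ.le hWI0
        have C := mul_le_mul_of_nonneg_right hk1 hWI0
        linarith
      · have A := mul_le_mul_of_nonneg_left h2.le hkpos.le
        have B := mul_lt_mul_of_pos_right hkξ hTpos
        linarith
    have hWIpos : 0 < WI := by
      by_contra h
      push_neg at h
      linarith [mul_nonpos_of_nonneg_of_nonpos hkpos.le h]
    set Pi := P.filter (fun q => π q = istar) with hPidef
    have hWIeq : WI = ∑ q ∈ Pi, w q := by
      rw [hWIdef, hPidef]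
      unfold asize
      rw [Finset.sum_filter]
    set costI := ∑ q ∈ Pi, w q * dist q (z istar) ^ r with hcostIdef
    have hcostI0 : 0 ≤ costI :=
      Finset.sum_nonneg fun q hq =>
        mul_nonneg (hw q (Finset.mem_of_mem_filter q hq)) (Real.rpow_nonneg dist_nonneg r)
    have hcostI_le : costI ≤ acost r P w z π := by
      have e : costI = ∑ q ∈ Pi, w q * dist q (z (π q)) ^ r :=
        Finset.sum_congr rfl fun q hq => by rw [(Finset.mem_filter.mp hq).2]
      rw [e]
      exact Finset.sum_le_sum_of_subset_of_nonneg (Finset.filter_subset _ _)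
        fun q hq _ => mul_nonneg (hw q hq) (Real.rpow_nonneg dist_nonneg r)
    have hdistQ : ∀ p ∈ P, dist p (z istar) ^ r * WI ≤ c1 * (G * WI + costI) := by
      intro p hp
      have h1 : dist p (z istar) ^ r * WI = ∑ q ∈ Pi, w q * dist p (z istar) ^ r := by
        rw [hWIeq, Finset.mul_sum]
        exact Finset.sum_congr rfl fun q _ => mul_comm _ _
      have h2 : ∀ q ∈ Pi, w q * dist p (z istar) ^ r
          ≤ w q * (c1 * (G + dist q (z istar) ^ r)) := by
        intro q hq
        obtain ⟨hqP, hqi⟩ := Finset.mem_filter.mp hq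
        have hstep : dist p (z istar) ^ r ≤ (dist p q + dist q (z istar)) ^ r :=
          Real.rpow_le_rpow dist_nonneg (dist_triangle p q (z istar)) hr0
        have hstep2 := aux_add_rpow (dist_nonneg (x := p) (y := q))
          (dist_nonneg (x := q) (y := z istar)) hr
        have hdpq : dist p q ^ r ≤ G := Real.rpow_le_rpow dist_nonneg (hdiam p hp q hqP) hr0
        have hchain : dist p (z istar) ^ r ≤ c1 * (G + dist q (z istar) ^ r) := by
          linarith [mul_le_mul_of_nonneg_left hdpq hc1.le]
        exact mul_le_mul_of_nonneg_left hchain (hw q hqP)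
      have h3 : ∑ q ∈ Pi, w q * (c1 * (G + dist q (z istar) ^ r)) = c1 * (G * WI + costI) := by
        calc ∑ q ∈ Pi, w q * (c1 * (G + dist q (z istar) ^ r))
            = ∑ q ∈ Pi, (c1 * (G * w q) + c1 * (w q * dist q (z istar) ^ r)) :=
              Finset.sum_congr rfl fun q _ => by ring
          _ = c1 * (G * (∑ q ∈ Pi, w q)) + c1 * (∑ q ∈ Pi, w q * dist q (z istar) ^ r) := by
              rw [Finset.sum_add_distrib, ← Finset.mul_sum, ← Finset.mul_sum, ← Finset.mul_sum]
          _ = c1 * (G * WI + costI) := by rw [← hWIeq, ← hcostIdef]; ring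
      calc dist p (z istar) ^ r * WI = ∑ q ∈ Pi, w q * dist p (z istar) ^ r := h1
        _ ≤ ∑ q ∈ Pi, w q * (c1 * (G + dist q (z istar) ^ r)) := Finset.sum_le_sum h2
        _ = c1 * (G * WI + costI) := h3
    set X := ∑ p ∈ P, (if b (π p) < 2*ξ*T then w p * dist p (z istar) ^ r else 0) with hXdef
    have hcost' : acost r P w z π' ≤ acost r P w z π + X := by
      unfold acost
      rw [← Finset.sum_add_distrib]
      refine Finset.sum_le_sum fun p hp => ?_
      rw [hπ'eq p hp]
      by_cases hc : b (π p) < 2*ξ*T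
      · rw [if_pos hc, if_pos hc]
        have h0 : 0 ≤ w p * dist p (z (π p)) ^ r :=
          mul_nonneg (hw p hp) (Real.rpow_nonneg dist_nonneg r)
        linarith
      · rw [if_neg hc, if_neg hc]
        simp
    have hXW : X * WI ≤ wQ * (c1 * (G * WI + costI)) := by
      rw [hXdef, hwQdef, Finset.sum_mul, Finset.sum_mul]
      refine Finset.sum_le_sum fun p hp => ?_
      by_cases hc : b (π p) < 2*ξ*T
      · rw [if_pos hc, if_pos hc, mul_assoc]
        exact mul_le_mul_of_nonneg_left (hdistQ p hp) (hw p hp)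
      · rw [if_neg hc, if_neg hc, zero_mul, zero_mul]
    clear_value totw G c1 WI costI X wQ
    have hfin : X ≤ 32*c1*(k:ℝ)^2*ξ*(acost r P w z π) + 4*ξ*c1*k*T*G := by
      have hgwc : 0 ≤ c1 * (G * WI + costI) :=
        mul_nonneg hc1.le (add_nonneg (mul_nonneg hG hWI0) hcostI0)
      have hm1 : wQ * (c1 * (G * WI + costI)) ≤ (3*k*ξ*T) * (c1 * (G * WI + costI)) :=
        mul_le_mul_of_nonneg_right hwQ hgwc
      have hm2 : costI * (0.87*T) ≤ (acost r P w z π) * (k * WI) :=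
        mul_le_mul hcostI_le hkWI (by linarith) hacost0
      have hco : (0:ℝ) ≤ 32*c1*k*ξ := by positivity
      have hm3 := mul_le_mul_of_nonneg_left hm2 hco
      have hn1 : 0 ≤ c1*k*ξ*T*costI :=
        mul_nonneg (mul_nonneg (mul_nonneg (mul_nonneg hc1.le hkpos.le) hξ0.le) hTpos.le) hcostI0
      have hn2 : 0 ≤ c1*k*ξ*T*(G*WI) :=
        mul_nonneg (mul_nonneg (mul_nonneg (mul_nonneg hc1.le hkpos.le) hξ0.le) hTpos.le)
          (mul_nonneg hG hWI0)
      have hmain : X * WI ≤ (32*c1*(k:ℝ)^2*ξ*(acost r P w z π) + 4*ξ*c1*k*T*G) * WI := by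
        linarith [hXW, hm1, hm3, hn1, hn2]
      exact le_of_mul_le_mul_right hmain hWIpos
    calc acost r P w z π' ≤ acost r P w z π + X := hcost'
      _ ≤ acost r P w z π + (32*c1*(k:ℝ)^2*ξ*(acost r P w z π) + 4*ξ*c1*k*T*G) := by linarith
      _ = (1 + (2:ℝ) ^ (r + 4) * k ^ 2 * ξ) * acost r P w z π + ξ * (2:ℝ) ^ (r + 1) * k * T * G := by
          rw [h24, h21]; ring
end

section
/- Let T ≥ 0, k ∈ ℤ_{≥1}, ξ ∈ (0,0.5), and let P ⊆ [Δ]^d be a finite point set with all weights equal to 1 and |P| ≥ T. Let Z = {z_1,…,z_k} ⊆ [Δ]^d, let 𝓗 be a set of assignment half-spaces corresponding to Z with induced regions (R_0,…,R_k), and let B̂ = (b̂_0,…,b̂_k) ∈ ℝ_{≥0}^{k+1} satisfy: for every i ∈ {0,…,k}, either b̂_i ∈ (1±ξ)·|R_i ∩ P| or b̂_i ∈ |R_i ∩ P| ± ξT. Let π̂ : P → Z be the transferred assignment corresponding to (𝓗,B̂,ξ,T). Then for every i ∈ [k], either s(π̂)_i = 0 or s(π̂)_i ≥ ξT. -/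
open scoped ENNReal Classical

/-- **Claim (each cluster of a transferred assignment is empty or large).**
For an unweighted point set `P` with `|P| ≥ T` and an admissible `B̂`, the transferred
assignment `π̂` corresponding to `(𝓗, B̂, ξ, T)` satisfies, for every `i ∈ [k]`,
either `s(π̂)_i = 0` or `s(π̂)_i ≥ ξT`. -/
theorem stmt6 (r : ℝ) (hr : 1 ≤ r) (Δ d k : ℕ) (hk : 1 ≤ k)
    (T ξ : ℝ) (hT : 0 ≤ T) (hξ : ξ ∈ Set.Ioo (0:ℝ) 0.5)
    (P : Finset (Pt d)) (hPgrid : ↑P ⊆ gridSet Δ d) (hPT : T ≤ (P.card : ℝ))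
    (z : Fin k → Pt d) (hzinj : Function.Injective z) (hzgrid : ∀ i, z i ∈ gridSet Δ d)
    (𝓗 : AssignHS r Δ d k z)
    (bh0 : ℝ) (bh : Fin k → ℝ) (hb0 : 0 ≤ bh0) (hb : ∀ i, 0 ≤ bh i)
    (hadm0 : AdmVal (regionWeight P (fun _ => 1) 𝓗.region0) bh0 ξ T)
    (hadm : ∀ i : Fin k, AdmVal (regionWeight P (fun _ => 1) (𝓗.region i)) (bh i) ξ T)
    (istar : Fin k) (histar : ∀ i, bh i ≤ bh istar)
    (πh : Pt d → Fin k) (hπh : IsTransferred 𝓗.region bh ξ T istar P πh) :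
    ∀ i : Fin k, asize P (fun _ => 1) πh i = 0 ∨ ξ * T ≤ asize P (fun _ => 1) πh i := by

  obtain ⟨hξ0, hξ5⟩ := hξ
  intro i
  by_cases hstar : 2 * ξ * T ≤ bh istar
  · by_cases hbi : 2 * ξ * T ≤ bh i
    · -- W_i ≥ ξT and s_i ≥ W_i
      right
      have hW : regionWeight P (fun _ => 1) (𝓗.region i) ≤ asize P (fun _ => 1) πh i := by
        unfold regionWeight asize
        apply Finset.sum_le_sum
        intro p hp
        by_cases hpR : p ∈ 𝓗.region i
        · have := (hπh p hp).1 i hbi hpR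
          simp [hpR, this]
        · simp only [hpR, if_false]
          positivity
      have hWlb : ξ * T ≤ regionWeight P (fun _ => 1) (𝓗.region i) := by
        rcases hadm i with ⟨h1, h2⟩ | ⟨h1, h2⟩
        · nlinarith
        · linarith
      linarith
    · -- nobody maps to i
      left
      unfold asize
      apply Finset.sum_eq_zero
      intro p hp
      have hne : πh p ≠ i := by
        intro hpe
        by_cases hex : ∀ j : Fin k, ¬(2 * ξ * T ≤ bh j ∧ p ∈ 𝓗.region j)
        · have := (hπh p hp).2 hex
          rw [hpe] at this
          exact hbi (this ▸ hstar)
        · push_neg at hex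
          obtain ⟨j, hj1, hj2⟩ := hex
          have := (hπh p hp).1 j hj1 hj2
          rw [hpe] at this
          exact hbi (this ▸ hj1)
      simp [hne]
  · -- everyone maps to istar
    have hall : ∀ p ∈ P, πh p = istar := by
      intro p hp
      apply (hπh p hp).2
      intro j hj
      exact hstar (le_trans hj.1 (histar j))
    by_cases hi : i = istar
    · right
      have : asize P (fun _ => 1) πh i = ∑ _p ∈ P, (1:ℝ) := by
        unfold asize
        apply Finset.sum_congr rfl
        intro p hp
        simp [hall p hp, hi]
      rw [this, Finset.sum_const, nsmul_eq_mul, mul_one]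
      nlinarith
    · left
      unfold asize
      apply Finset.sum_eq_zero
      intro p hp
      simp [hall p hp, Ne.symm hi]
end

section
/- Let λ ≥ 4 be an even integer and let X = Σ_{i=1}^n X_i, where X_1,…,X_n are λ-wise independent random variables each taking values in [0,M]. Let μ = E[X]. Then for every a > 0, Pr[|X − μ| > a] ≤ 8·((μλM + λ²M²)/a²)^{λ/2}. -/
open MeasureTheory ProbabilityTheory Finset
open scoped Nat

/-!
Write `λ = 2h` and `Y_i = X_i - E X_i`, so that `(X - μ)^λ` is the sum over all maps
`f : Fin λ → Fin n` of `∏ t, Y_(f t)`. By λ-wise independence the expectation of such a term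
factorises over the image of `f` into moments `E Y_i^c`, `c` the size of the fiber of `i`.
Since `E Y_i = 0`, the term vanishes unless every fiber has at least two points; then the image
has `k ≤ h` elements, and `|E Y_i^c| ≤ M^(c-2) Var X_i ≤ M^(c-1) E X_i` bounds the term by
`M^(λ-k) ∏_{i ∈ image f} E X_i`. Marking two points in each fiber shows that at most
`λ(λ-1)⋯(λ-2k+1) k^(λ-2k) ≤ k! (h choose k) λ^(λ-k)` maps have a given `k`-element image, and
`k! e_k(E X_1, …, E X_n) ≤ μ^k`; summing over `k` with the binomial theorem gives
`E (X - μ)^λ ≤ (μλM + λ²M²)^h`, and Markov's inequality for `(X - μ)^λ` concludes.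
-/

lemma descFactorial_two_mul (h k : ℕ) :
    (2 * h).descFactorial (2 * k) =
      2 ^ k * h.descFactorial k * ∏ j ∈ range k, (2 * h - 2 * j - 1) := by
  induction k with
  | zero => simp
  | succ k ih =>
    rw [show 2 * (k + 1) = 2 * k + 1 + 1 by ring, Nat.descFactorial_succ, Nat.descFactorial_succ,
      ih, Nat.descFactorial_succ, prod_range_succ,
      show 2 * h - (2 * k + 1) = 2 * h - 2 * k - 1 by omega,
      show 2 * h - 2 * k = 2 * (h - k) by omega]
    ring

lemma prod_range_two_mul_sub_sub_one_le {h k : ℕ} (hk : k ≤ h) :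
    ∏ j ∈ range k, (2 * h - 2 * j - 1) ≤ (2 * h - k) ^ k := by
  refine (Nat.pow_le_pow_iff_left two_ne_zero).1 ?_
  calc (∏ j ∈ range k, (2 * h - 2 * j - 1)) ^ 2
      = ∏ j ∈ range k, ((2 * h - 2 * j - 1) * (2 * h - 2 * (k - 1 - j) - 1)) := by
        rw [prod_mul_distrib, prod_range_reflect (fun j => 2 * h - 2 * j - 1), sq]
    _ ≤ ∏ j ∈ range k, (2 * h - k) ^ 2 := by
        refine prod_le_prod (fun _ _ => Nat.zero_le _) fun j hj => ?_
        -- the factors for `j` and `k - 1 - j` have arithmetic mean `2h - k`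
        have hsum : (2 * h - 2 * j - 1) + (2 * h - 2 * (k - 1 - j) - 1) = 2 * (2 * h - k) := by
          have := mem_range.1 hj; omega
        have := four_mul_le_sq_add (2 * h - 2 * j - 1) (2 * h - 2 * (k - 1 - j) - 1)
        rw [hsum] at this
        nlinarith
    _ = ((2 * h - k) ^ k) ^ 2 := by rw [prod_const, card_range, ← pow_mul, ← pow_mul, mul_comm 2 k]

lemma add_pow_le_four_pow_mul_pow {h k : ℕ} (r : ℕ) (hk : k ≤ h) :
    (h + r) ^ k ≤ 4 ^ r * h ^ k := by
  rcases Nat.eq_zero_or_pos h with rfl | hh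
  · obtain rfl : k = 0 := by omega
    simpa using Nat.one_le_pow _ _ (by norm_num)
  have hh' : (0 : ℝ) < h := by exact_mod_cast hh
  suffices ((h : ℝ) + r) ^ k ≤ 4 ^ r * (h : ℝ) ^ k by exact_mod_cast this
  calc ((h : ℝ) + r) ^ k = (1 + r / h) ^ k * (h : ℝ) ^ k := by
        rw [← mul_pow]; congr 1; field_simp
    _ ≤ Real.exp (r / h) ^ k * (h : ℝ) ^ k := by
        gcongr
        linarith [Real.add_one_le_exp (r / h : ℝ)]
    _ = Real.exp (k / h * r) * (h : ℝ) ^ k := by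
        rw [← Real.exp_nat_mul]; ring_nf
    _ ≤ Real.exp (1 * r) * (h : ℝ) ^ k := by
        gcongr
        rw [div_le_one hh']
        exact_mod_cast hk
    _ ≤ 4 ^ r * (h : ℝ) ^ k := by
        rw [one_mul, ← mul_one (r : ℝ), Real.exp_nat_mul]
        gcongr
        linarith [Real.exp_one_lt_d9]

lemma descFactorial_two_mul_mul_pow_le (h k : ℕ) :
    (2 * h).descFactorial (2 * k) * k ^ (2 * h - 2 * k) ≤
      k ! * h.choose k * (2 * h) ^ (2 * h - k) := by
  rcases lt_or_ge h k with hhk | hkh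
  · simp [Nat.descFactorial_eq_zero_iff_lt.2 (by omega : 2 * h < 2 * k)]
  obtain ⟨r, rfl⟩ := Nat.exists_eq_add_of_le hkh
  rw [descFactorial_two_mul, ← Nat.descFactorial_eq_factorial_mul_choose]
  set D := (k + r).descFactorial k
  calc 2 ^ k * D * (∏ j ∈ range k, (2 * (k + r) - 2 * j - 1)) * k ^ (2 * (k + r) - 2 * k)
      ≤ 2 ^ k * D * (k + r + r) ^ k * k ^ (2 * r) := by
        rw [show 2 * (k + r) - 2 * k = 2 * r by omega]
        gcongr
        exact (prod_range_two_mul_sub_sub_one_le (by omega)).trans_eq (by congr 1; omega)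
    _ ≤ 2 ^ k * D * (4 ^ r * (k + r) ^ k) * k ^ (2 * r) := by
        gcongr
        exact add_pow_le_four_pow_mul_pow r (by omega)
    _ = D * (2 * (k + r)) ^ k * (2 * k) ^ (2 * r) := by
        rw [show 4 ^ r = 2 ^ (2 * r) by rw [pow_mul]; norm_num, mul_pow 2 (k + r)]
        ring
    _ ≤ D * (2 * (k + r)) ^ k * (2 * (k + r)) ^ (2 * r) := by gcongr
    _ = D * (2 * (k + r)) ^ (2 * (k + r) - k) := by
        rw [mul_assoc, ← pow_add]; congr 2; omega

lemma factorial_mul_sum_powersetCard_prod_le {ι : Type*} [DecidableEq ι] (s : Finset ι) (m : ι → ℝ)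
    (hm : ∀ i ∈ s, 0 ≤ m i) (k : ℕ) :
    k ! * ∑ S ∈ s.powersetCard k, ∏ i ∈ S, m i ≤ (∑ i ∈ s, m i) ^ k := by
  classical
  -- `k! ∏_{i ∈ S} m i` is the multinomial term of the indicator exponent of `S`
  let ind : Finset ι → ι → ℕ := fun S i => if i ∈ S then 1 else 0
  have hind : Set.InjOn ind (s.powersetCard k) := fun S _ T _ hST => by
    ext i
    have := congrFun hST i
    simp only [ind] at this
    split_ifs at this <;> simp_all
  have hsum {S} (hS : S ∈ s.powersetCard k) : ∑ i ∈ s, ind S i = k := by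
    obtain ⟨hSs, hSk⟩ := mem_powersetCard.1 hS
    simp [ind, inter_eq_right.2 hSs, hSk]
  rw [sum_pow_eq_sum_piAntidiag, mul_sum]
  calc ∑ S ∈ s.powersetCard k, (k ! : ℝ) * ∏ i ∈ S, m i
      = ∑ S ∈ s.powersetCard k, (Nat.multinomial s (ind S) : ℝ) * ∏ i ∈ s, m i ^ ind S i := by
        refine sum_congr rfl fun S hS => ?_
        have hmult : Nat.multinomial s (ind S) = k ! := by
          simpa [hsum hS, ind, apply_ite Nat.factorial] using Nat.multinomial_spec s (ind S)
        simp only [hmult, ind, pow_ite, pow_one, pow_zero]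
        rw [prod_ite_mem, inter_eq_right.2 (mem_powersetCard.1 hS).1]
    _ = ∑ x ∈ (s.powersetCard k).image ind, (Nat.multinomial s x : ℝ) * ∏ i ∈ s, m i ^ x i :=
        (sum_image (f := fun x => (Nat.multinomial s x : ℝ) * ∏ i ∈ s, m i ^ x i) hind).symm
    _ ≤ _ := by
      refine sum_le_sum_of_subset_of_nonneg (fun x hx => ?_) fun x _ _ => ?_
      · obtain ⟨S, hS, rfl⟩ := mem_image.1 hx
        refine mem_piAntidiag.2 ⟨hsum hS, fun i hi => ?_⟩
        by_contra his
        exact hi (if_neg fun hiS => his ((mem_powersetCard.1 hS).1 hiS))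
      · exact mul_nonneg (Nat.cast_nonneg _) (prod_nonneg fun i hi => pow_nonneg (hm i hi) _)

def NoSingletonFibers {α β : Type*} [Fintype α] [DecidableEq β] (f : α → β) : Prop :=
  ∀ a, 2 ≤ #{b | f b = f a}

instance {α β : Type*} [Fintype α] [DecidableEq β] :
    DecidablePred (NoSingletonFibers (α := α) (β := β)) :=
  fun _ => Fintype.decidableForallFintype

lemma NoSingletonFibers.two_mul_card_image_le {α β : Type*} [Fintype α] [DecidableEq β]
    {f : α → β} (hf : NoSingletonFibers f) : 2 * #(image f univ) ≤ Fintype.card α := by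
  calc 2 * #(image f univ) = ∑ _i ∈ image f univ, 2 := by rw [sum_const, smul_eq_mul, mul_comm]
    _ ≤ ∑ i ∈ image f univ, #{a | f a = i} := sum_le_sum fun i hi => by
        obtain ⟨a, -, rfl⟩ := mem_image.1 hi
        exact hf a
    _ = Fintype.card α := by rw [← card_eq_sum_card_image, card_univ]

lemma card_noSingletonFibers_image_eq_le {α β : Type*} [Fintype α] [DecidableEq α] [Fintype β]
    [DecidableEq β] (S : Finset β) :
    #{f : α → β | NoSingletonFibers f ∧ image f univ = S} ≤
      (Fintype.card α).descFactorial (2 * #S) * #S ^ (Fintype.card α - 2 * #S) := by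
  -- a map is determined by two marked points in each fiber and its values elsewhere
  let decode : (Σ e : S × Fin 2 ↪ α, ({t // t ∉ Set.range e} → S)) → α → β := fun c t =>
    if h : t ∈ Set.range c.1 then (c.1.invOfMemRange ⟨t, h⟩).1 else c.2 ⟨t, h⟩
  calc _ ≤ #(univ : Finset (Σ e : S × Fin 2 ↪ α, ({t // t ∉ Set.range e} → S))) := by
        refine card_le_card_of_surjOn decode fun f hf => ?_
        obtain ⟨-, hfib, hfS⟩ := mem_filter.1 (mem_coe.1 hf)
        have hcard (i : S) : Fintype.card (Fin 2) ≤ Fintype.card {t // f t = i} := by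
          obtain ⟨a, -, hai⟩ := mem_image.1 (hfS.symm ▸ i.2 : (i : β) ∈ image f univ)
          simpa [Fintype.card_subtype, ← hai] using hfib a
        have marks (i : S) : Fin 2 ↪ {t // f t = i} :=
          (Function.Embedding.nonempty_of_card_le (hcard i)).some
        have hfe (p : S × Fin 2) : f (marks p.1 p.2) = p.1 := (marks p.1 p.2).2
        let e : S × Fin 2 ↪ α := ⟨fun p => marks p.1 p.2, fun ⟨i, b⟩ ⟨j, c⟩ hpq => by
          obtain rfl : i = j :=
            Subtype.ext ((hfe (i, b)).symm.trans ((congrArg f hpq).trans (hfe (j, c))))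
          exact Prod.ext rfl ((marks i).injective (Subtype.ext hpq))⟩
        have hfS' (t : α) : f t ∈ S := hfS ▸ mem_image_of_mem f (mem_univ t)
        refine ⟨⟨e, fun t => ⟨f t, hfS' t⟩⟩, mem_coe.2 (mem_univ _), funext fun t => ?_⟩
        by_cases ht : t ∈ Set.range e
        · simp only [decode, dif_pos ht]
          exact (hfe _).symm.trans (congrArg f (e.left_inv_of_invOfMemRange ⟨t, ht⟩))
        · simp only [decode, dif_neg ht]
    _ = _ := by
        rw [card_univ, Fintype.card_sigma]
        simp only [Fintype.card_fun, Fintype.card_subtype_compl,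
          Set.card_range_of_injective (Function.Embedding.injective _)]
        simp [Fintype.card_embedding_eq, mul_comm]

lemma sum_noSingletonFibers_prod_image_le {α ι : Type*} [Fintype α] [DecidableEq α] [Fintype ι]
    [DecidableEq ι] (m : ι → ℝ) (hm : ∀ i, 0 ≤ m i) (k : ℕ) :
    ∑ f : α → ι with NoSingletonFibers f ∧ #(image f univ) = k, ∏ i ∈ image f univ, m i ≤
      (Fintype.card α).descFactorial (2 * k) * k ^ (Fintype.card α - 2 * k) *
        ∑ S ∈ powersetCard k univ, ∏ i ∈ S, m i := by
  rw [← sum_fiberwise_of_maps_to (g := fun f => image f univ) (t := powersetCard k univ)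
    fun f hf => mem_powersetCard_univ.2 (mem_filter.1 hf).2.2, mul_sum]
  refine sum_le_sum fun S hS => ?_
  have hSk : #S = k := mem_powersetCard_univ.1 hS
  have hfilter (f : α → ι) : (NoSingletonFibers f ∧ #(image f univ) = k) ∧ image f univ = S ↔
      NoSingletonFibers f ∧ image f univ = S :=
    ⟨fun ⟨⟨hf, _⟩, hfS⟩ => ⟨hf, hfS⟩, fun ⟨hf, hfS⟩ => ⟨⟨hf, hfS ▸ hSk⟩, hfS⟩⟩
  rw [filter_filter, filter_congr fun f _ => hfilter f,
    sum_congr rfl fun f hf => by rw [(mem_filter.1 hf).2.2], sum_const, nsmul_eq_mul]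
  gcongr
  · exact prod_nonneg fun i _ => hm i
  · rw [← hSk]
    exact_mod_cast card_noSingletonFibers_image_eq_le S

lemma sum_ite_noSingletonFibers_le {ι : Type*} [Fintype ι] [DecidableEq ι] (m : ι → ℝ)
    (hm : ∀ i, 0 ≤ m i) {M : ℝ} (hM : 0 ≤ M) (h : ℕ) :
    ∑ f : Fin (2 * h) → ι, (if NoSingletonFibers f then
        M ^ (2 * h - #(image f univ)) * ∏ i ∈ image f univ, m i else 0) ≤
      ((∑ i, m i) * (2 * h) * M + (2 * h) ^ 2 * M ^ 2) ^ h := by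
  rw [← sum_filter, ← sum_fiberwise_of_maps_to (g := fun f => #(image f univ)) (t := range (h + 1))
    fun f hf => mem_range.2 ?_, add_pow]
  swap
  · have := (mem_filter.1 hf).2.two_mul_card_image_le
    rw [Fintype.card_fin] at this
    omega
  refine sum_le_sum fun k hk => ?_
  set e := ∑ S ∈ powersetCard k univ, ∏ i ∈ S, m i
  have he : 0 ≤ e := sum_nonneg fun S _ => prod_nonneg fun i _ => hm i
  calc ∑ f ∈ {f : Fin (2 * h) → ι | NoSingletonFibers f} with #(image f univ) = k,
        M ^ (2 * h - #(image f univ)) * ∏ i ∈ image f univ, m i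
      = M ^ (2 * h - k) * ∑ f : Fin (2 * h) → ι with NoSingletonFibers f ∧ #(image f univ) = k,
          ∏ i ∈ image f univ, m i := by
        rw [filter_filter, mul_sum]
        exact sum_congr rfl fun f hf => by rw [(mem_filter.1 hf).2.2]
    _ ≤ M ^ (2 * h - k) * ((2 * h).descFactorial (2 * k) * k ^ (2 * h - 2 * k) * e) := by
        gcongr
        simpa using sum_noSingletonFibers_prod_image_le (α := Fin (2 * h)) m hm k
    _ ≤ M ^ (2 * h - k) * ((k ! * h.choose k * (2 * h) ^ (2 * h - k) : ℕ) * e) := by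
        gcongr
        exact_mod_cast descFactorial_two_mul_mul_pow_le h k
    _ = h.choose k * (2 * h * M) ^ (2 * h - k) * (k ! * e) := by
        push_cast
        ring
    _ ≤ h.choose k * (2 * h * M) ^ (2 * h - k) * (∑ i, m i) ^ k := by
        gcongr
        exact factorial_mul_sum_powersetCard_prod_le _ _ (fun i _ => hm i) k
    _ = ((∑ i, m i) * (2 * h) * M) ^ k * ((2 * h) ^ 2 * M ^ 2) ^ (h - k) * h.choose k := by
        rw [show 2 * h - k = k + 2 * (h - k) by have := mem_range.1 hk; omega, pow_add, pow_mul]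
        ring

section Moments

variable {Ω : Type*} [MeasurableSpace Ω] {μ : Measure Ω}

lemma abs_sub_integral_le_of_mem_Icc [IsProbabilityMeasure μ] {X : Ω → ℝ} {M : ℝ}
    (hXM : ∀ ω, X ω ∈ Set.Icc 0 M) (ω : Ω) : |X ω - ∫ ω', X ω' ∂μ| ≤ M := by
  have hm0 : 0 ≤ ∫ ω', X ω' ∂μ := integral_nonneg fun ω => (hXM ω).1
  have hmM : ∫ ω', X ω' ∂μ ≤ M := by
    simpa using integral_mono_of_nonneg (ae_of_all _ fun ω => (hXM ω).1)
      (integrable_const (μ := μ) M) (ae_of_all _ fun ω => (hXM ω).2)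
  exact abs_le.2 ⟨by linarith [(hXM ω).1], by linarith [(hXM ω).2]⟩

lemma abs_integral_sub_integral_pow_le [IsProbabilityMeasure μ] {X : Ω → ℝ} {M : ℝ}
    (hX : Measurable X) (hXM : ∀ ω, X ω ∈ Set.Icc 0 M) {c : ℕ} (hc : 2 ≤ c) :
    |∫ ω, (X ω - ∫ ω', X ω' ∂μ) ^ c ∂μ| ≤ M ^ (c - 1) * ∫ ω, X ω ∂μ := by
  set m := ∫ ω, X ω ∂μ
  obtain ⟨ω₀⟩ := nonempty_of_isProbabilityMeasure μ
  have hM : 0 ≤ M := (hXM ω₀).1.trans (hXM ω₀).2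
  have hsq : Integrable (fun ω => (X ω - m) ^ 2) μ :=
    .of_bound ((hX.sub_const m).pow_const 2).aestronglyMeasurable (M ^ 2) <| ae_of_all _ fun ω => by
      rw [Real.norm_eq_abs, abs_pow]; gcongr; exact abs_sub_integral_le_of_mem_Icc hXM ω
  calc |∫ ω, (X ω - m) ^ c ∂μ| ≤ ∫ ω, |X ω - m| ^ c ∂μ := by
        simpa only [abs_pow] using
          abs_integral_le_integral_abs (μ := μ) (f := fun ω => (X ω - m) ^ c)
    _ ≤ ∫ ω, M ^ (c - 2) * (X ω - m) ^ 2 ∂μ := by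
        refine integral_mono_of_nonneg (ae_of_all _ fun ω => by positivity) (hsq.const_mul _)
          (ae_of_all _ fun ω => ?_)
        calc |X ω - m| ^ c = |X ω - m| ^ (c - 2) * |X ω - m| ^ 2 := by
              rw [← pow_add, Nat.sub_add_cancel hc]
          _ ≤ M ^ (c - 2) * (X ω - m) ^ 2 := by
              rw [sq_abs]; gcongr; exact abs_sub_integral_le_of_mem_Icc hXM ω
    _ = M ^ (c - 2) * Var[X; μ] := by rw [integral_const_mul, variance_eq_integral hX.aemeasurable]
    _ ≤ M ^ (c - 2) * ((M - m) * (m - 0)) := mul_le_mul_of_nonneg_left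
        (variance_le_sub_mul_sub (ae_of_all _ hXM) hX.aemeasurable) (pow_nonneg hM _)
    _ ≤ M ^ (c - 1) * m := by
        rw [show c - 1 = c - 2 + 1 by omega, pow_succ, mul_assoc]
        exact mul_le_mul_of_nonneg_left (by nlinarith [sq_nonneg m]) (pow_nonneg hM _)

lemma integral_finsetProd_comp_of_iIndepFun {ι : Type*} {X : ι → Ω → ℝ} {s : Finset ι}
    (hind : iIndepFun (fun i : s => X i) μ) (hX : ∀ i, Measurable (X i)) {g : ι → ℝ → ℝ}
    (hg : ∀ i, Measurable (g i)) :
    ∫ ω, ∏ i ∈ s, g i (X i ω) ∂μ = ∏ i ∈ s, ∫ ω, g i (X i ω) ∂μ := by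
  simp_rw [← prod_coe_sort s]
  exact hind.integral_fun_prod_comp (f := fun i : s => g i)
    (fun i => (hX i).aemeasurable) (fun i => (hg i).aestronglyMeasurable)

lemma measureReal_lt_abs_le_integral_pow_div [IsFiniteMeasure μ] {Z : Ω → ℝ} {k : ℕ}
    (hk : Even k) (hZ : Integrable (fun ω => Z ω ^ k) μ) {a : ℝ} (ha : 0 < a) :
    μ.real {ω | a < |Z ω|} ≤ (∫ ω, Z ω ^ k ∂μ) / a ^ k := by
  rw [le_div_iff₀ (pow_pos ha k), mul_comm]
  calc a ^ k * μ.real {ω | a < |Z ω|} ≤ a ^ k * μ.real {ω | a ^ k ≤ Z ω ^ k} := by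
        refine mul_le_mul_of_nonneg_left ?_ (pow_nonneg ha.le k)
        exact measureReal_mono (μ := μ) fun ω (hω : a < |Z ω|) =>
          show a ^ k ≤ Z ω ^ k from hk.pow_abs (Z ω) ▸ pow_le_pow_left₀ ha.le hω.le k
    _ ≤ ∫ ω, Z ω ^ k ∂μ :=
        mul_meas_ge_le_integral_of_nonneg (ae_of_all _ fun ω => hk.pow_nonneg _) hZ _

variable [IsProbabilityMeasure μ] {ι : Type*} [DecidableEq ι] {X : ι → Ω → ℝ} {M : ℝ}

lemma integral_prod_sub_integral_le {α : Type*} [Fintype α] (hX : ∀ i, Measurable (X i))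
    (hXM : ∀ i ω, X i ω ∈ Set.Icc 0 M) (f : α → ι)
    (hind : iIndepFun (fun i : image f univ => X i) μ) :
    ∫ ω, ∏ a, (X (f a) ω - ∫ ω', X (f a) ω' ∂μ) ∂μ ≤
      if NoSingletonFibers f then
        M ^ (Fintype.card α - #(image f univ)) * ∏ i ∈ image f univ, ∫ ω, X i ω ∂μ
      else 0 := by
  set m : ι → ℝ := fun i => ∫ ω, X i ω ∂μ
  have hfactor : ∫ ω, ∏ a, (X (f a) ω - m (f a)) ∂μ =
      ∏ i ∈ image f univ, ∫ ω, (X i ω - m i) ^ #{a | f a = i} ∂μ := by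
    rw [integral_congr_ae (ae_of_all _ fun ω => prod_comp (fun i => X i ω - m i) f)]
    exact integral_finsetProd_comp_of_iIndepFun hind hX fun i =>
      (measurable_id.sub_const _).pow_const _
  rw [hfactor]
  split_ifs with hf
  · calc ∏ i ∈ image f univ, ∫ ω, (X i ω - m i) ^ #{a | f a = i} ∂μ
        ≤ ∏ i ∈ image f univ, M ^ (#{a | f a = i} - 1) * m i := by
          refine (le_abs_self _).trans ((abs_prod _ _).trans_le
            (prod_le_prod (fun _ _ => abs_nonneg _) fun i hi => ?_))
          obtain ⟨a, -, rfl⟩ := mem_image.1 hi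
          exact abs_integral_sub_integral_pow_le (hX _) (hXM _) (hf a)
      _ = M ^ (Fintype.card α - #(image f univ)) * ∏ i ∈ image f univ, m i := by
          rw [prod_mul_distrib, prod_pow_eq_pow_sum, sum_tsub_distrib, ← card_eq_sum_card_image,
            card_univ, sum_const, smul_eq_mul, mul_one]
          intro i hi
          obtain ⟨a, -, rfl⟩ := mem_image.1 hi
          exact card_pos.2 ⟨a, by simp⟩
  · obtain ⟨a, ha⟩ := not_forall.1 hf
    have h1 : #{b | f b = f a} = 1 := le_antisymm (by omega) (card_pos.2 ⟨a, by simp⟩)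
    refine (prod_eq_zero (mem_image_of_mem f (mem_univ a)) ?_).le
    have hint : Integrable (X (f a)) μ := .of_mem_Icc 0 M (hX _).aemeasurable (ae_of_all _ (hXM _))
    simp only [h1, pow_one]
    rw [integral_sub hint (integrable_const _), integral_const]
    simp [m]

theorem integral_sum_sub_integral_pow_le [Fintype ι] (hX : ∀ i, Measurable (X i))
    (hXM : ∀ i ω, X i ω ∈ Set.Icc 0 M) {h : ℕ}
    (hind : ∀ S : Finset ι, #S ≤ 2 * h → iIndepFun (fun i : S => X i) μ) :
    ∫ ω, (∑ i, (X i ω - ∫ ω', X i ω' ∂μ)) ^ (2 * h) ∂μ ≤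
      ((∑ i, ∫ ω, X i ω ∂μ) * (2 * h) * M + (2 * h) ^ 2 * M ^ 2) ^ h := by
  rcases isEmpty_or_nonempty ι with hι | ⟨⟨i₀⟩⟩
  · simp only [univ_eq_empty, sum_empty, zero_mul, zero_add, integral_const, probReal_univ,
      one_smul]
    rw [pow_mul, zero_pow two_ne_zero]
    exact pow_le_pow_left₀ le_rfl (by positivity) h
  obtain ⟨ω₀⟩ := nonempty_of_isProbabilityMeasure μ
  have hM : 0 ≤ M := (hXM i₀ ω₀).1.trans (hXM i₀ ω₀).2
  have hint (f : Fin (2 * h) → ι) :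
      Integrable (fun ω => ∏ a, (X (f a) ω - ∫ ω', X (f a) ω' ∂μ)) μ := by
    refine .of_bound (Finset.measurable_prod _ fun a _ => (hX _).sub_const _).aestronglyMeasurable
      (M ^ (2 * h)) (ae_of_all _ fun ω => ?_)
    rw [Real.norm_eq_abs, abs_prod]
    exact (prod_le_prod (s := univ) (fun a _ => abs_nonneg _) fun a _ =>
      abs_sub_integral_le_of_mem_Icc (μ := μ) (hXM (f a)) ω).trans_eq (by simp)
  calc _ = ∑ f : Fin (2 * h) → ι, ∫ ω, ∏ a, (X (f a) ω - ∫ ω', X (f a) ω' ∂μ) ∂μ := by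
        simp_rw [Fintype.sum_pow]
        exact integral_finsetSum _ fun f _ => hint f
    _ ≤ ∑ f : Fin (2 * h) → ι, if NoSingletonFibers f then
          M ^ (2 * h - #(image f univ)) * ∏ i ∈ image f univ, ∫ ω, X i ω ∂μ else 0 := by
        refine sum_le_sum fun f _ => ?_
        simpa using integral_prod_sub_integral_le hX hXM f (hind _ (card_image_le.trans (by simp)))
    _ ≤ _ := sum_ite_noSingletonFibers_le _ (fun i => integral_nonneg fun ω => (hXM i ω).1) hM h

theorem measureReal_lt_abs_sum_sub_integral_le [Fintype ι] (hX : ∀ i, Measurable (X i))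
    (hXM : ∀ i ω, X i ω ∈ Set.Icc 0 M) {h : ℕ}
    (hind : ∀ S : Finset ι, #S ≤ 2 * h → iIndepFun (fun i : S => X i) μ) {a : ℝ} (ha : 0 < a) :
    μ.real {ω | a < |∑ i, (X i ω - ∫ ω', X i ω' ∂μ)|} ≤
      (((∑ i, ∫ ω, X i ω ∂μ) * (2 * h) * M + (2 * h) ^ 2 * M ^ 2) / a ^ 2) ^ h := by
  have hint : Integrable (fun ω => (∑ i, (X i ω - ∫ ω', X i ω' ∂μ)) ^ (2 * h)) μ := by
    have hmeas := (Finset.measurable_sum univ fun i _ => (hX i).sub_const (∫ ω', X i ω' ∂μ))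
    refine .of_bound (hmeas.pow_const _).aestronglyMeasurable ((Fintype.card ι * M) ^ (2 * h))
      (ae_of_all _ fun ω => ?_)
    rw [Real.norm_eq_abs, abs_pow]
    gcongr
    exact (abs_sum_le_sum_abs _ univ).trans ((sum_le_sum fun i _ =>
      abs_sub_integral_le_of_mem_Icc (μ := μ) (hXM i) ω).trans_eq (by simp))
  rw [div_pow, ← pow_mul]
  exact (measureReal_lt_abs_le_integral_pow_div (even_two_mul h) hint ha).trans
    (div_le_div_of_nonneg_right (integral_sum_sub_integral_pow_le hX hXM hind) (by positivity))

end Moments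

theorem stmt8_general {Ω : Type*} [MeasurableSpace Ω] (μ : Measure Ω) [IsProbabilityMeasure μ]
    (n lam : ℕ) (hlamEven : Even lam)
    (M : ℝ) (X : Fin n → Ω → ℝ) (hXmeas : ∀ i, Measurable (X i))
    (hXbdd : ∀ i, ∀ ω, X i ω ∈ Set.Icc (0:ℝ) M)
    (hindep : ∀ S : Finset (Fin n), S.card ≤ lam →
        iIndepFun (fun i : S => X i.1) μ)
    (a : ℝ) (ha : 0 < a) :
    μ {ω | a < |(∑ i, X i ω) - ∫ ω', (∑ i, X i ω') ∂μ|} ≤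
      ENNReal.ofReal (8 * (((∫ ω', (∑ i, X i ω') ∂μ) * lam * M + (lam:ℝ) ^ 2 * M ^ 2)
        / a ^ 2) ^ (lam / 2)) := by
  obtain ⟨h, rfl⟩ := hlamEven.two_dvd
  have hint (i : Fin n) : Integrable (X i) μ :=
    .of_mem_Icc 0 M (hXmeas i).aemeasurable (ae_of_all _ (hXbdd i))
  have hcentre (ω : Ω) :
      ∑ i, X i ω - ∫ ω', ∑ i, X i ω' ∂μ = ∑ i, (X i ω - ∫ ω', X i ω' ∂μ) := by
    rw [integral_finsetSum _ fun i _ => hint i, ← sum_sub_distrib]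
  have htail := measureReal_lt_abs_sum_sub_integral_le hXmeas hXbdd hindep ha
  simp_rw [hcentre, integral_finsetSum _ fun i _ => hint i, Nat.mul_div_cancel_left h two_pos]
  rw [← ofReal_measureReal]
  refine ENNReal.ofReal_le_ofReal ?_
  push_cast
  linarith [measureReal_nonneg.trans htail]

/-- **Concentration for sums of λ-wise independent bounded random variables**
(Lemma 3.10, from Bellare–Rompel): if `λ ≥ 4` is even and `X = Σ_{i=1}^n X_i` where
the `X_i` are λ-wise independent random variables taking values in `[0, M]`, then for
every `a > 0`, `Pr[|X − μ| > a] ≤ 8·((μλM + λ²M²)/a²)^{λ/2}`, where `μ = E[X]`. -/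
theorem stmt8 {Ω : Type*} [MeasurableSpace Ω] (μ : Measure Ω) [IsProbabilityMeasure μ]
    (n lam : ℕ) (hlam4 : 4 ≤ lam) (hlamEven : Even lam)
    (M : ℝ) (X : Fin n → Ω → ℝ) (hXmeas : ∀ i, Measurable (X i))
    (hXbdd : ∀ i, ∀ ω, X i ω ∈ Set.Icc (0:ℝ) M)
    (hindep : ∀ S : Finset (Fin n), S.card ≤ lam →
        iIndepFun (fun i : S => X i.1) μ)
    (a : ℝ) (ha : 0 < a) :
    μ {ω | a < |(∑ i, X i ω) - ∫ ω', (∑ i, X i ω') ∂μ|} ≤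
      ENNReal.ofReal (8 * (((∫ ω', (∑ i, X i ω') ∂μ) * lam * M + (lam:ℝ) ^ 2 * M ^ 2)
        / a ^ 2) ^ (lam / 2)) :=
  stmt8_general μ n lam hlamEven M X hXmeas hXbdd hindep a ha
end

section
/- Let L ≥ 1 be an integer, Δ = 2^L, d ≥ 1, and let Z* ⊆ [Δ]^d be a set of at most k points. Let v ∈ ℝ^d have i.i.d. coordinates uniform on [0,Δ], and for i ∈ {0,1,…,L} let G_i be the grid of axis-aligned cells of side length g_i = Δ/2^i anchored at v, i.e. G_i = { ∏_{l=1}^d [v_l + g_i t_l, v_l + g_i(t_l+1)) : t ∈ ℤ^d }. Call a cell C ∈ G_i a center cell if dist(C, Z*) ≤ g_i/d, where dist(C,Z*) = inf{dist(x,z) : x ∈ C, z ∈ Z*}. Then with probability at least 0.99 over the choice of v, the total number of center cells over all levels i ∈ {0,…,L} is at most 2000kL. -/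
/-!
A center cell `(i, t)` of side `g = Δ / 2 ^ i` lies within distance `r = g / d` of some `z ∈ Z*`,
so in every coordinate `l` the interval `[v_l + g t_l, v_l + g (t_l + 1)]` is within `r` of `z_l`.
Hence the number of center cells is at most `∑_i ∑_z ∏_l N_l`, where `N_l` counts such intervals.
`N_l` is also the number of translates `K - g t` of an interval `K` of length `g + 2 r` that
contain `v_l`; as `v_l` is uniform over `2 ^ i` whole periods of `gℤ`, its expectation is
`(g + 2 r) / g = 1 + 2 / d`. The coordinates of `v` are independent, so the bound has expectation
`(L + 1) |Z*| (1 + 2 / d) ^ d ≤ 2 L k e² < 20 k L`, and Markov's inequality at `2000 k L` leaves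
probability at most `0.01`.
-/

open scoped ENNReal

noncomputable section

/-- The axis-aligned grid cell of side length `g`, anchored at `v`, with index `t ∈ ℤ^d`:
`∏_l [v_l + g·t_l, v_l + g·(t_l+1))`. -/
def cellOf (d : ℕ) (v : Fin d → ℝ) (g : ℝ) (t : Fin d → ℤ) : Set (Pt d) :=
  {x | ∀ l : Fin d, v l + g * t l ≤ x l ∧ x l < v l + g * (t l + 1)}

/-- The distance between two sets, `dist(A,B) = inf{dist(a,b) : a ∈ A, b ∈ B}`. -/
def setDist {d : ℕ} (A B : Set (Pt d)) : ℝ :=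
  sInf (Set.image2 dist A B)

end

open MeasureTheory ProbabilityTheory Set

lemma tsum_indicator_one_comp_eq_card {ι α : Type*} (s : Finset ι) (A : Set α) (p : ι → α)
    (h : ∀ i, p i ∈ A ↔ i ∈ s) : ∑' i, A.indicator (1 : α → ℝ≥0∞) (p i) = s.card := by
  classical
  have : (fun i => A.indicator (1 : α → ℝ≥0∞) (p i)) = (s : Set ι).indicator 1 := by
    funext i
    simp [indicator_apply, h]
  rw [this, ← tsum_subtype]
  simp

lemma lintegral_mul_tsum_comp_add {G ι : Type*} [MeasurableSpace G] [AddGroup G]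
    [MeasurableAdd G] [MeasurableSub G] (μ : Measure G) [μ.IsAddRightInvariant] [Countable ι]
    (c : ι → G) {f h : G → ℝ≥0∞} (hf : Measurable f) (hh : Measurable h) :
    ∫⁻ x, f x * ∑' i, h (x + c i) ∂μ = ∫⁻ y, h y * ∑' i, f (y - c i) ∂μ := by
  simp_rw [← ENNReal.tsum_mul_left]
  rw [lintegral_tsum (f := fun i x => f x * h (x + c i)) fun i =>
      (hf.mul (hh.comp (measurable_add_const (c i)))).aemeasurable,
    lintegral_tsum (f := fun i y => h y * f (y - c i)) fun i =>
      (hh.mul (hf.comp (measurable_sub_const (c i)))).aemeasurable]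
  refine tsum_congr fun i => ?_
  rw [← lintegral_add_right_eq_self (fun y => h y * f (y - c i)) (c i)]
  simp only [add_sub_cancel_right, mul_comm]

lemma lintegral_pi_prod_eq_prod {ι : Type*} [Fintype ι] {Ω : ι → Type*}
    [∀ i, MeasurableSpace (Ω i)] (μ : ∀ i, Measure (Ω i)) [∀ i, IsProbabilityMeasure (μ i)]
    (f : ∀ i, Ω i → ℝ≥0∞) (hf : ∀ i, Measurable (f i)) :
    ∫⁻ x, ∏ i, f i (x i) ∂Measure.pi μ = ∏ i, ∫⁻ y, f i y ∂μ i := by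
  rw [lintegral_prod_eq_prod_lintegral_of_indepFun _ _
    (iIndepFun_pi fun i => (hf i).aemeasurable) fun i => (hf i).comp (measurable_pi_apply i)]
  exact Finset.prod_congr rfl fun i _ => (measurePreserving_eval μ i).lintegral_comp (hf i)

lemma le_measure_of_lintegral_le {α : Type*} [MeasurableSpace α] {μ : Measure α}
    [IsProbabilityMeasure μ] {F : α → ℝ≥0∞} (hF : Measurable F) {c ε : ℝ≥0∞} (hc₀ : c ≠ 0)
    (hc : c ≠ ∞) (hint : ∫⁻ x, F x ∂μ ≤ ε * c) {s : Set α} (hs : {x | F x < c} ⊆ s) :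
    1 - ε ≤ μ s := by
  have hbad : μ {x | c ≤ F x} ≤ ε :=
    (meas_ge_le_lintegral_div hF.aemeasurable hc₀ hc).trans (ENNReal.div_le_of_le_mul hint)
  calc 1 - ε ≤ 1 - μ {x | c ≤ F x} := tsub_le_tsub_left hbad 1
    _ = μ {x | c ≤ F x}ᶜ := (prob_compl_eq_one_sub (measurableSet_le measurable_const hF)).symm
    _ ≤ μ s := measure_mono fun x (hx : ¬c ≤ F x) => hs (not_le.mp hx)

lemma one_add_div_pow_le_exp {x : ℝ} (hx : 0 ≤ x) (n : ℕ) : (1 + x / n) ^ n ≤ Real.exp x := by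
  rcases n.eq_zero_or_pos with rfl | hn
  · simpa using Real.one_le_exp hx
  calc (1 + x / n) ^ n ≤ Real.exp (x / n) ^ n := by
        gcongr
        linarith [Real.add_one_le_exp (x / n)]
    _ = Real.exp x := by
        rw [← Real.exp_nat_mul]
        field_simp

lemma exp_two_lt_nine : Real.exp 2 < 9 := by
  have h := Real.exp_one_lt_d9
  have h2 : Real.exp 2 = Real.exp 1 * Real.exp 1 := by
    rw [← Real.exp_add]
    norm_num
  nlinarith [Real.exp_pos 1]

lemma ncard_le_sum_sum_prod_card {ι α β : Type*} [Fintype ι] {S : Set (ℕ × (ι → β))} (L : ℕ)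
    (Z : Finset α) (C : ℕ → α → ι → Finset β)
    (hS : ∀ it ∈ S, it.1 ≤ L ∧ ∃ z ∈ Z, ∀ l, it.2 l ∈ C it.1 z l) :
    S.ncard ≤ ∑ i ∈ Finset.range (L + 1), ∑ z ∈ Z, ∏ l, (C i z l).card := by
  classical
  let B := (Finset.range (L + 1)).biUnion fun i =>
    Z.biUnion fun z => {i} ×ˢ Fintype.piFinset (C i z)
  have hSB : S ⊆ B := by
    rintro ⟨i, t⟩ hit
    obtain ⟨hi, z, hz, ht⟩ := hS _ hit
    simp only [B, Finset.coe_biUnion, mem_iUnion, Finset.mem_coe, Finset.mem_range]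
    exact ⟨i, by omega, z, hz, by simpa using ht⟩
  calc S.ncard ≤ B.card := by simpa using ncard_le_ncard hSB
    _ ≤ ∑ i ∈ Finset.range (L + 1), ∑ z ∈ Z, ({i} ×ˢ Fintype.piFinset (C i z)).card :=
      Finset.card_biUnion_le.trans (Finset.sum_le_sum fun i _ => Finset.card_biUnion_le)
    _ = ∑ i ∈ Finset.range (L + 1), ∑ z ∈ Z, ∏ l, (C i z l).card := by simp

noncomputable def nearCells (g r w : ℝ) : Finset ℤ :=
  Finset.Icc (⌈(w - r) / g⌉ - 1) ⌊(w + r) / g⌋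

section NearCells

variable {g : ℝ}

lemma mem_nearCells (hg : 0 < g) {r w : ℝ} {t : ℤ} :
    t ∈ nearCells g r w ↔ g * t - r ≤ w ∧ w ≤ g * (t + 1) + r := by
  rw [nearCells, Finset.mem_Icc, sub_le_iff_le_add, Int.ceil_le, Int.le_floor, div_le_iff₀ hg,
    le_div_iff₀ hg]
  push_cast
  constructor <;> rintro ⟨h₁, h₂⟩ <;> constructor <;> linarith

lemma card_nearCells_sub_eq_tsum (hg : 0 < g) (r z v : ℝ) :
    ((nearCells g r (z - v)).card : ℝ≥0∞) =
      ∑' t : ℤ, (Icc (z - g - r) (z + r)).indicator 1 (v + g * t) := by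
  refine (tsum_indicator_one_comp_eq_card _ _ _ fun t => ?_).symm
  rw [mem_nearCells hg, mem_Icc]
  constructor <;> rintro ⟨h₁, h₂⟩ <;> constructor <;> linarith

lemma measurable_card_nearCells_sub (hg : 0 < g) (r z : ℝ) :
    Measurable fun v => ((nearCells g r (z - v)).card : ℝ≥0∞) := by
  simp_rw [card_nearCells_sub_eq_tsum hg]
  exact Measurable.tsum fun t =>
    (measurable_one.indicator measurableSet_Icc).comp (measurable_add_const _)

lemma tsum_indicator_Ico_sub_mul (hg : 0 < g) (M : ℕ) (y : ℝ) :
    ∑' t : ℤ, (Ico 0 (M * g)).indicator 1 (y - g * t) = (M : ℝ≥0∞) := by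
  rw [tsum_indicator_one_comp_eq_card (Finset.Ioc (⌊y / g⌋ - M) ⌊y / g⌋)]
  · simp [Int.card_Ioc]
  intro t
  rw [Finset.mem_Ioc, sub_lt_iff_lt_add, Int.floor_lt, Int.le_floor, mem_Ico, div_lt_iff₀ hg,
    le_div_iff₀ hg]
  push_cast
  constructor <;> rintro ⟨h₁, h₂⟩ <;> constructor <;> linarith

/-- The count is the number of translates `K - g t` of `K = [z - g - r, z + r]` containing `v`;
exchanging the roles of `K` and the window `[0, M g)` turns it into the number of translates of the
window containing a point of `K`, which is exactly `M`. -/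
lemma setLIntegral_Ico_card_nearCells (hg : 0 < g) (r : ℝ) (M : ℕ) (z : ℝ) :
    ∫⁻ v in Ico 0 (M * g), ((nearCells g r (z - v)).card : ℝ≥0∞) =
      M * ENNReal.ofReal (g + 2 * r) := by
  calc ∫⁻ v in Ico 0 (M * g), ((nearCells g r (z - v)).card : ℝ≥0∞)
      = ∫⁻ v, (Ico 0 (M * g)).indicator 1 v *
          ∑' t : ℤ, (Icc (z - g - r) (z + r)).indicator 1 (v + g * t) := by
        rw [← lintegral_indicator measurableSet_Ico]
        congr 1 with v
        simp only [indicator_apply, Pi.one_apply, card_nearCells_sub_eq_tsum hg]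
        split_ifs <;> simp
    _ = ∫⁻ y, (Icc (z - g - r) (z + r)).indicator 1 y *
          ∑' t : ℤ, (Ico 0 (M * g)).indicator 1 (y - g * t) :=
        lintegral_mul_tsum_comp_add _ _ (measurable_one.indicator measurableSet_Ico)
          (measurable_one.indicator measurableSet_Icc)
    _ = M * ENNReal.ofReal (g + 2 * r) := by
        simp_rw [tsum_indicator_Ico_sub_mul hg]
        rw [lintegral_mul_const _ (measurable_one.indicator measurableSet_Icc),
          lintegral_indicator_one measurableSet_Icc, Real.volume_Icc, mul_comm]
        ring_nf

lemma lintegral_cond_Icc_card_nearCells (hg : 0 < g) {M : ℕ} (hM : M ≠ 0) {a : ℝ}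
    (ha : a = M * g) (r z : ℝ) :
    ∫⁻ v, ((nearCells g r (z - v)).card : ℝ≥0∞) ∂volume[|Icc 0 a] =
      ENNReal.ofReal (1 + 2 * r / g) := by
  subst ha
  have hMg : (0 : ℝ) < M * g := by positivity
  rw [ProbabilityTheory.cond, lintegral_smul_measure, ← Measure.restrict_congr_set Ico_ae_eq_Icc,
    setLIntegral_Ico_card_nearCells hg, Real.volume_Icc, sub_zero, smul_eq_mul,
    ← ENNReal.ofReal_inv_of_pos hMg, ← ENNReal.ofReal_natCast,
    ← ENNReal.ofReal_mul (by positivity), ← ENNReal.ofReal_mul (by positivity)]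
  congr 1
  field_simp

end NearCells

section Geometry

variable {d : ℕ} {v : Fin d → ℝ} {g : ℝ} {t : Fin d → ℤ}

lemma cellOf_nonempty (hg : 0 < g) : (cellOf d v g t).Nonempty :=
  ⟨WithLp.toLp 2 fun l => v l + g * t l, fun l => ⟨le_rfl, by simp [hg]⟩⟩

lemma closure_cellOf_subset :
    closure (cellOf d v g t) ⊆ {x | ∀ l, v l + g * t l ≤ x l ∧ x l ≤ v l + g * (t l + 1)} := by
  refine closure_minimal (fun x hx l => ⟨(hx l).1, (hx l).2.le⟩) ?_
  simp only [ofPred_forall, ofPred_and]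
  refine isClosed_iInter fun l =>
    (isClosed_le continuous_const ?_).inter (isClosed_le ?_ continuous_const)
  all_goals fun_prop

lemma exists_infDist_le_setDist {C : Set (Pt d)} (hC : C.Nonempty) {Z : Finset (Pt d)}
    (hZ : Z.Nonempty) : ∃ z ∈ Z, Metric.infDist z C ≤ setDist C Z := by
  obtain ⟨z, hz, hmin⟩ := Z.exists_min_image (Metric.infDist · C) hZ
  refine ⟨z, hz, le_csInf (hC.image2 hZ) ?_⟩
  rintro _ ⟨x, hx, y, hy, rfl⟩
  exact (hmin y hy).trans ((Metric.infDist_le_dist_of_mem hx).trans_eq (dist_comm y x))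

lemma exists_forall_mem_nearCells_of_setDist_le (hg : 0 < g) {Z : Finset (Pt d)}
    (hZ : Z.Nonempty) {r : ℝ} (h : setDist (cellOf d v g t) Z ≤ r) :
    ∃ z ∈ Z, ∀ l, t l ∈ nearCells g r (z l - v l) := by
  obtain ⟨z, hz, hzC⟩ := exists_infDist_le_setDist (cellOf_nonempty hg) hZ
  obtain ⟨y, hyC, hy⟩ := Metric.exists_mem_closure_infDist_eq_dist (cellOf_nonempty (v := v) hg) z
  refine ⟨z, hz, fun l => (mem_nearCells hg).2 ?_⟩
  have hyl := closure_cellOf_subset hyC l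
  have hdist : |z l - y l| ≤ r := by
    rw [← Real.dist_eq]
    exact (PiLp.dist_apply_le z y l).trans (hy ▸ hzC.trans h)
  constructor <;> linarith [abs_le.1 hdist]

end Geometry

def centerCells (d L : ℕ) (Δ : ℝ) (Z : Set (Pt d)) (v : Fin d → ℝ) : Set (ℕ × (Fin d → ℤ)) :=
  {it | it.1 ≤ L ∧ setDist (cellOf d v (Δ / 2 ^ it.1) it.2) Z ≤ Δ / 2 ^ it.1 / d}

noncomputable def centerCellBound (d L : ℕ) (Δ : ℝ) (Z : Finset (Pt d)) (v : Fin d → ℝ) : ℝ≥0∞ :=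
  ∑ i ∈ Finset.range (L + 1), ∑ z ∈ Z,
    ∏ l, ((nearCells (Δ / 2 ^ i) (Δ / 2 ^ i / d) (z l - v l)).card : ℝ≥0∞)

section CenterCells

variable {d L : ℕ} {Δ : ℝ}

/-- `setDist C ∅ = sInf ∅ = 0`, so every cell is a center cell, and `ncard` of an infinite set
is `0`. -/
lemma ncard_centerCells_empty (hd : d ≠ 0) (hΔ : 0 ≤ Δ) (v : Fin d → ℝ) :
    (centerCells d L Δ ∅ v).ncard = 0 := by
  refine Infinite.ncard (infinite_of_injective_forall_mem (f := fun n : ℤ => (0, fun _ => n))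
    (fun m n hmn => congr_fun (congr_arg Prod.snd hmn) ⟨0, Nat.pos_of_ne_zero hd⟩) fun n => ?_)
  simp only [centerCells, setDist, image2_empty_right, Real.sInf_empty]
  exact ⟨Nat.zero_le L, by positivity⟩

lemma ncard_centerCells_le (hΔ : 0 < Δ) {Z : Finset (Pt d)} (hZ : Z.Nonempty) (v : Fin d → ℝ) :
    ((centerCells d L Δ Z v).ncard : ℝ≥0∞) ≤ centerCellBound d L Δ Z v := by
  unfold centerCellBound
  exact_mod_cast ncard_le_sum_sum_prod_card (S := centerCells d L Δ Z v) L Z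
    (fun i z l => nearCells (Δ / 2 ^ i) (Δ / 2 ^ i / d) (z l - v l)) fun it hit =>
      ⟨hit.1, exists_forall_mem_nearCells_of_setDist_le (by positivity) hZ hit.2⟩

lemma measurable_prod_card_nearCells (hΔ : 0 < Δ) (i : ℕ) (z : Pt d) :
    Measurable fun v : Fin d → ℝ =>
      ∏ l, ((nearCells (Δ / 2 ^ i) (Δ / 2 ^ i / d) (z l - v l)).card : ℝ≥0∞) :=
  Finset.measurable_prod _ fun l _ =>
    (measurable_card_nearCells_sub (by positivity) _ _).comp (measurable_pi_apply l)

lemma measurable_centerCellBound (hΔ : 0 < Δ) (Z : Finset (Pt d)) :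
    Measurable (centerCellBound d L Δ Z) :=
  Finset.measurable_sum _ fun i _ => Finset.measurable_sum _ fun z _ =>
    measurable_prod_card_nearCells hΔ i z

lemma lintegral_centerCellBound (hΔ : 0 < Δ) (Z : Finset (Pt d)) :
    ∫⁻ v, centerCellBound d L Δ Z v ∂Measure.pi (fun _ => volume[|Icc 0 Δ]) =
      (L + 1) * Z.card * ENNReal.ofReal ((1 + 2 / d) ^ d) := by
  have : IsProbabilityMeasure volume[|Icc (0 : ℝ) Δ] :=
    cond_isProbabilityMeasure_of_finite (by simp [hΔ]) (by simp)
  have hcoord (i : ℕ) (z : Pt d) (l : Fin d) :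
      ∫⁻ x, ((nearCells (Δ / 2 ^ i) (Δ / 2 ^ i / d) (z l - x)).card : ℝ≥0∞) ∂volume[|Icc 0 Δ] =
        ENNReal.ofReal (1 + 2 / d) := by
    rw [lintegral_cond_Icc_card_nearCells (M := 2 ^ i) (by positivity) (by positivity)
      (by push_cast; field_simp)]
    congr 1
    field_simp
  have hlevel (i : ℕ) (z : Pt d) :
      ∫⁻ v, ∏ l, ((nearCells (Δ / 2 ^ i) (Δ / 2 ^ i / d) (z l - v l)).card : ℝ≥0∞)
        ∂Measure.pi (fun _ => volume[|Icc 0 Δ]) = ENNReal.ofReal ((1 + 2 / d) ^ d) := by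
    rw [lintegral_pi_prod_eq_prod _ _ fun l => measurable_card_nearCells_sub (by positivity) _ _,
      ENNReal.ofReal_pow (by positivity)]
    simp [hcoord]
  unfold centerCellBound
  rw [lintegral_finsetSum _ fun i _ => by
    exact Finset.measurable_sum _ fun z _ => measurable_prod_card_nearCells hΔ i z]
  refine (Finset.sum_congr rfl fun i _ =>
    lintegral_finsetSum _ fun z _ => measurable_prod_card_nearCells hΔ i z).trans ?_
  simp [hlevel, mul_assoc]

lemma lintegral_centerCellBound_le {k : ℕ} (hΔ : 0 < Δ) (hL : 1 ≤ L) {Z : Finset (Pt d)}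
    (hZ : Z.card ≤ k) :
    ∫⁻ v, centerCellBound d L Δ Z v ∂Measure.pi (fun _ => volume[|Icc 0 Δ]) ≤
      ENNReal.ofReal 0.01 * ((2000 * k * L : ℕ) : ℝ≥0∞) := by
  have hpow : (1 + 2 / d : ℝ) ^ d ≤ 9 :=
    (one_add_div_pow_le_exp zero_le_two d).trans exp_two_lt_nine.le
  have hZk : (Z.card : ℝ) ≤ k := by exact_mod_cast hZ
  have hL' : (L : ℝ) + 1 ≤ 2 * L := by exact_mod_cast (by omega : L + 1 ≤ 2 * L)
  calc ∫⁻ v, centerCellBound d L Δ Z v ∂Measure.pi (fun _ => volume[|Icc 0 Δ])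
      = ENNReal.ofReal ((L + 1) * Z.card * (1 + 2 / d) ^ d) := by
        rw [lintegral_centerCellBound hΔ, ENNReal.ofReal_mul (by positivity),
          ENNReal.ofReal_mul (by positivity)]
        norm_cast
    _ ≤ ENNReal.ofReal (0.01 * (2000 * k * L : ℕ)) := by
        refine ENNReal.ofReal_le_ofReal ?_
        calc (L + 1) * Z.card * (1 + 2 / d : ℝ) ^ d ≤ (2 * L) * k * 9 := by gcongr
          _ ≤ 0.01 * (2000 * k * L : ℕ) := by
            push_cast
            nlinarith [mul_nonneg (Nat.cast_nonneg (α := ℝ) k) (Nat.cast_nonneg (α := ℝ) L)]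
    _ = ENNReal.ofReal 0.01 * ((2000 * k * L : ℕ) : ℝ≥0∞) := by
        rw [ENNReal.ofReal_mul (by norm_num), ENNReal.ofReal_natCast]

end CenterCells

theorem stmt11_general (L Δ d k : ℕ) (hL : 1 ≤ L) (hΔ : Δ = 2 ^ L) (hd : 1 ≤ d)
    (Zstar : Finset (Pt d)) (hZcard : Zstar.card ≤ k) :
    ENNReal.ofReal 0.99 ≤
      (MeasureTheory.Measure.pi fun _ : Fin d =>
          ((Δ : ℝ≥0∞))⁻¹ • MeasureTheory.volume.restrict (Set.Icc (0:ℝ) (Δ:ℝ)))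
        {v : Fin d → ℝ |
          ((Set.ncard {it : ℕ × (Fin d → ℤ) | it.1 ≤ L ∧
              setDist (cellOf d v ((Δ:ℝ) / 2 ^ it.1) it.2) (↑Zstar : Set (Pt d)) ≤
                ((Δ:ℝ) / 2 ^ it.1) / d}) : ℝ) ≤ 2000 * k * L} := by
  have hΔ₀ : (0 : ℝ) < Δ := by rw [hΔ]; positivity
  have hμ : (Δ : ℝ≥0∞)⁻¹ • volume.restrict (Icc (0 : ℝ) Δ) = volume[|Icc 0 (Δ : ℝ)] := by
    rw [ProbabilityTheory.cond, Real.volume_Icc, sub_zero, ENNReal.ofReal_natCast]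
  have : IsProbabilityMeasure volume[|Icc (0 : ℝ) Δ] :=
    cond_isProbabilityMeasure_of_finite (by simp [hΔ]) (by simp)
  change _ ≤ Measure.pi (fun _ => _) {v | ((centerCells d L Δ Zstar v).ncard : ℝ) ≤ 2000 * k * L}
  rw [hμ]
  rcases Zstar.eq_empty_or_nonempty with rfl | hZ
  · have : (0 : ℝ) ≤ 2000 * k * L := by positivity
    norm_num [ncard_centerCells_empty (by omega : d ≠ 0) hΔ₀.le, this]
  have hk : 0 < k := hZ.card_pos.trans_le hZcard
  calc ENNReal.ofReal 0.99 = 1 - ENNReal.ofReal 0.01 := by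
        rw [← ENNReal.ofReal_one, ← ENNReal.ofReal_sub _ (by norm_num)]
        norm_num
    _ ≤ _ := le_measure_of_lintegral_le (measurable_centerCellBound hΔ₀ Zstar)
          (by positivity) (ENNReal.natCast_ne_top _)
          (lintegral_centerCellBound_le hΔ₀ hL hZcard) fun v hv => by
        have := (ncard_centerCells_le hΔ₀ hZ v).trans_lt hv
        exact_mod_cast this.le

/-- **Lemma 3.2 (Number of center cells).** Shift the hierarchical grids
`G_0,…,G_L` (cell side length `g_i = Δ/2^i` at level `i`) by a uniformly random
vector `v ∈ [0,Δ]^d`. A cell `C ∈ G_i` is a *center cell* if `dist(C, Z*) ≤ g_i/d`.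
Then with probability at least `0.99` over `v`, the total number of center cells
over all levels is at most `2000kL`. -/
theorem stmt11 (L Δ d k : ℕ) (hL : 1 ≤ L) (hΔ : Δ = 2 ^ L) (hd : 1 ≤ d)
    (Zstar : Finset (Pt d)) (hZgrid : ↑Zstar ⊆ gridSet Δ d) (hZcard : Zstar.card ≤ k) :
    ENNReal.ofReal 0.99 ≤
      (MeasureTheory.Measure.pi fun _ : Fin d =>
          ((Δ : ℝ≥0∞))⁻¹ • MeasureTheory.volume.restrict (Set.Icc (0:ℝ) (Δ:ℝ)))
        {v : Fin d → ℝ |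
          ((Set.ncard {it : ℕ × (Fin d → ℤ) | it.1 ≤ L ∧
              setDist (cellOf d v ((Δ:ℝ) / 2 ^ it.1) it.2) (↑Zstar : Set (Pt d)) ≤
                ((Δ:ℝ) / 2 ^ it.1) / d}) : ℝ) ≤ 2000 * k * L} :=
  stmt11_general L Δ d k hL hΔ hd Zstar hZcard
end

section
/- Let d ≥ 1, g > 0, and fix a point z ∈ ℝ^d. Let v ∈ ℝ^d have i.i.d. coordinates uniform on [0,g], and let G be the grid of axis-aligned cells of side length g anchored at v, i.e. G = { ∏_{l=1}^d [v_l + g t_l, v_l + g(t_l+1)) : t ∈ ℤ^d }. Then the expected number of cells C ∈ G with dist(C, z) ≤ g/d is at most (1 + 2/d)^d ≤ e². -/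
open scoped ENNReal

open MeasureTheory Set

/-! If the cell with index `t` comes within distance `r` of `z`, then in every coordinate its lower
corner `v l + g t l` lies in the interval `[z l - r - g, z l + r]` of length `g + 2r`. Bounding the
number of such `t` and integrating over `v`, the expectation factorizes over the coordinates, and in
each coordinate the translates of `[0, g)` by `gℤ` tile the line, so the expected number of `n` with
`v l + g n` in an interval of length `g + 2r` is `(g + 2r)/g`. For `r = g/d` this gives
`(1 + 2/d)^d`, and `1 + x ≤ eˣ` gives the bound `e²`. -/

lemma ENNReal.tsum_fin_pi_prod {κ : Type*} :
    ∀ {d : ℕ} (a : Fin d → κ → ℝ≥0∞), ∑' t : Fin d → κ, ∏ l, a l (t l) = ∏ l, ∑' n, a l n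
  | 0, a => by simp
  | d + 1, a => by
    rw [← (Fin.consEquiv fun _ : Fin (d + 1) => κ).tsum_eq, ENNReal.tsum_prod']
    simp [Fin.prod_univ_succ, ENNReal.tsum_mul_left, ENNReal.tsum_mul_right,
      ENNReal.tsum_fin_pi_prod]

lemma natCast_ncard_le_encard {α : Type*} (s : Set α) : (s.ncard : ℝ≥0∞) ≤ s.encard := by
  rcases s.finite_or_infinite with hs | hs
  · rw [← hs.cast_ncard_eq]; simp
  · simp [hs.ncard]

lemma lintegral_encard_setOf_mem {α ι : Type*} [MeasurableSpace α] [Countable ι]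
    (μ : Measure α) {s : ι → Set α} (hs : ∀ i, MeasurableSet (s i)) :
    ∫⁻ x, ({i | x ∈ s i}.encard : ℝ≥0∞) ∂μ = ∑' i, μ (s i) := by
  have hcount (x : α) : ({i | x ∈ s i}.encard : ℝ≥0∞) = ∑' i, (s i).indicator 1 x := by
    rw [← ENNReal.tsum_set_one, tsum_subtype {i | x ∈ s i} fun _ => 1]
    rfl
  simp_rw [hcount]
  rw [lintegral_tsum fun i => (measurable_one.indicator (hs i)).aemeasurable]
  simp [lintegral_indicator_one (hs _)]

lemma tsum_volume_preimage_add_mul_inter_Ico {g : ℝ} (hg : 0 < g) {I : Set ℝ}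
    (hI : MeasurableSet I) :
    ∑' n : ℤ, volume ((· + g * n) ⁻¹' I ∩ Ico 0 g) = volume I :=
  calc ∑' n : ℤ, volume ((· + g * n) ⁻¹' I ∩ Ico 0 g)
      = ∑' n : ℤ, volume (I ∩ Ico (n • g) ((n + 1) • g)) := tsum_congr fun n => by
        rw [← measure_preimage_add_right volume (g * n) (I ∩ _), preimage_inter,
          preimage_add_const_Ico, zsmul_eq_mul, zsmul_eq_mul]
        congr 3 <;> push_cast <;> ring
    _ = volume (⋃ n : ℤ, I ∩ Ico (n • g) ((n + 1) • g)) := by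
        refine (measure_iUnion (fun m n hmn => ?_) fun n => hI.inter measurableSet_Ico).symm
        simpa using ((pairwise_disjoint_Ico_add_zsmul 0 g) hmn).mono inter_subset_right
          inter_subset_right
    _ = volume I := by rw [← inter_iUnion, iUnion_Ico_zsmul hg, inter_univ]

lemma tsum_inv_smul_restrict_Icc_preimage_add_mul {g : ℝ} (hg : 0 < g) {I : Set ℝ}
    (hI : MeasurableSet I) :
    ∑' n : ℤ, ((ENNReal.ofReal g)⁻¹ • volume.restrict (Icc 0 g)) ((· + g * n) ⁻¹' I)
      = (ENNReal.ofReal g)⁻¹ * volume I := by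
  rw [Measure.restrict_congr_set Ico_ae_eq_Icc.symm]
  simp [Measure.restrict_apply' measurableSet_Ico, ENNReal.tsum_mul_left,
    tsum_volume_preimage_add_mul_inter_Ico hg hI]

lemma isProbabilityMeasure_inv_smul_restrict_Icc {g : ℝ} (hg : 0 < g) :
    IsProbabilityMeasure ((ENNReal.ofReal g)⁻¹ • volume.restrict (Icc (0 : ℝ) g)) :=
  ⟨by simp [ENNReal.inv_mul_cancel (ENNReal.ofReal_pos.mpr hg).ne' ENNReal.ofReal_ne_top]⟩

lemma le_setDist_singleton {d : ℕ} {A : Set (Pt d)} (hA : A.Nonempty) {z : Pt d} {c : ℝ}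
    (h : ∀ x ∈ A, c ≤ dist x z) : c ≤ setDist A {z} := by
  rw [setDist, image2_singleton_right]
  exact le_csInf (hA.image _) (forall_mem_image.2 h)

lemma add_mul_mem_Icc_of_setDist_cellOf_le {d : ℕ} {v : Fin d → ℝ} {g r : ℝ} (hg : 0 < g)
    {t : Fin d → ℤ} {z : Pt d} (h : setDist (cellOf d v g t) {z} ≤ r) (l : Fin d) :
    v l + g * t l ∈ Icc (z l - r - g) (z l + r) := by
  have hne : (cellOf d v g t).Nonempty :=
    ⟨WithLp.toLp 2 fun l => v l + g * t l, fun l => by simpa [mul_add] using hg⟩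
  have hcoord (x : Pt d) (hx : x ∈ cellOf d v g t) :
      |x l - z l| ≤ dist x z ∧ v l + g * t l ≤ x l ∧ x l < v l + g * t l + g :=
    ⟨PiLp.dist_apply_le x z l, (hx l).1, by linarith [(hx l).2]⟩
  have hlow := le_setDist_singleton hne fun x hx =>
    (show z l - (v l + g * t l) - g ≤ dist x z by
      obtain ⟨hdist, -, hlt⟩ := hcoord x hx
      linarith [neg_abs_le (x l - z l)])
  have hupp := le_setDist_singleton hne fun x hx =>
    (show v l + g * t l - z l ≤ dist x z by
      obtain ⟨hdist, hle, -⟩ := hcoord x hx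
      linarith [le_abs_self (x l - z l)])
  constructor <;> linarith

theorem stmt12_general (d : ℕ) (g : ℝ) (hg : 0 < g) (z : Pt d) :
    (∫⁻ v : Fin d → ℝ,
        ((Set.ncard {t : Fin d → ℤ | setDist (cellOf d v g t) {z} ≤ g / d}) : ℝ≥0∞)
      ∂(MeasureTheory.Measure.pi fun _ : Fin d =>
          (ENNReal.ofReal g)⁻¹ • MeasureTheory.volume.restrict (Set.Icc (0:ℝ) g))) ≤
      ENNReal.ofReal ((1 + 2 / (d:ℝ)) ^ d) ∧
    (1 + 2 / (d:ℝ)) ^ d ≤ Real.exp 2 := by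
  have hexp := Real.one_sub_div_pow_le_exp_neg (n := d) (t := -2)
    ((neg_nonpos.2 zero_le_two).trans d.cast_nonneg)
  refine ⟨?_, by simpa only [neg_div, sub_neg_eq_add, neg_neg] using hexp⟩
  set μ₁ := (ENNReal.ofReal g)⁻¹ • volume.restrict (Icc (0:ℝ) g)
  have := isProbabilityMeasure_inv_smul_restrict_Icc hg
  let I : Fin d → Set ℝ := fun l => Icc (z l - g / d - g) (z l + g / d)
  let box (t : Fin d → ℤ) : Set (Fin d → ℝ) := univ.pi fun l => (· + g * t l) ⁻¹' I l
  have hbox (t : Fin d → ℤ) : MeasurableSet (box t) :=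
    .univ_pi fun l => measurableSet_Icc.preimage (measurable_add_const _)
  calc _ ≤ ∫⁻ v, ({t | v ∈ box t}.encard : ℝ≥0∞) ∂(Measure.pi fun _ => μ₁) :=
        lintegral_mono fun v => (natCast_ncard_le_encard _).trans <| by
          refine ENat.toENNReal_le.2 (encard_le_encard fun t ht l _ => ?_)
          exact add_mul_mem_Icc_of_setDist_cellOf_le hg ht l
    _ = ∏ l, ∑' n : ℤ, μ₁ ((· + g * n) ⁻¹' I l) := by
        rw [lintegral_encard_setOf_mem _ hbox]
        simp_rw [box, Measure.pi_pi]
        exact ENNReal.tsum_fin_pi_prod fun l (n : ℤ) => μ₁ ((· + g * n) ⁻¹' I l)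
    _ = ∏ _l : Fin d, ENNReal.ofReal (1 + 2 / d) := by
        refine Finset.prod_congr rfl fun l _ => ?_
        have hlen : z l + g / d - (z l - g / d - g) = g * (1 + 2 / d) := by ring
        rw [tsum_inv_smul_restrict_Icc_preimage_add_mul hg measurableSet_Icc, Real.volume_Icc, hlen,
          ← ENNReal.ofReal_inv_of_pos hg, ← ENNReal.ofReal_mul (by positivity),
          inv_mul_cancel_left₀ hg.ne']
    _ = ENNReal.ofReal ((1 + 2 / (d:ℝ)) ^ d) := by
        rw [Finset.prod_const, Finset.card_fin, ENNReal.ofReal_pow (by positivity)]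

/-- **Expected number of cells close to a fixed point** (proof of Lemma 3.2):
for a grid of side length `g` anchored at a uniformly random `v ∈ [0,g]^d`, the
expected number of cells `C` with `dist(C,z) ≤ g/d` is at most `(1+2/d)^d ≤ e²`. -/
theorem stmt12 (d : ℕ) (hd : 1 ≤ d) (g : ℝ) (hg : 0 < g) (z : Pt d) :
    (∫⁻ v : Fin d → ℝ,
        ((Set.ncard {t : Fin d → ℤ | setDist (cellOf d v g t) {z} ≤ g / d}) : ℝ≥0∞)
      ∂(MeasureTheory.Measure.pi fun _ : Fin d =>
          (ENNReal.ofReal g)⁻¹ • MeasureTheory.volume.restrict (Set.Icc (0:ℝ) g))) ≤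
      ENNReal.ofReal ((1 + 2 / (d:ℝ)) ^ d) ∧
    (1 + 2 / (d:ℝ)) ^ d ≤ Real.exp 2 :=
  stmt12_general d g hg z
end

section
/- Let r ≥ 1, let Q ⊆ ℝ^d be a finite point set, let Z* ⊆ ℝ^d be a finite nonempty set, let o > 0, and let g > 0. Let G be any grid of pairwise disjoint axis-aligned cells of side length g (i.e. cells ∏_{l=1}^d [v_l + g t_l, v_l + g(t_l+1)) for a fixed anchor v and t ∈ ℤ^d), and set T = 0.01·o/(√d·g)^r. Then the number of cells C ∈ G satisfying both |C ∩ Q| ≥ 0.9T and dist(C, Z*) > g/d is at most 120·d^{1.5r}·(Σ_{p∈Q} dist(p,Z*)^r)/o. -/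
open scoped ENNReal Classical

/-!
A cell that is at distance more than `g/d` from `Z*` and holds at least `0.9T` points of `Q`
contributes at least `0.9T·(g/d)^r` to the cost `Σ_{p∈Q} dist(p,Z*)^r`. The cells are disjoint,
so these contributions add up to at most the cost; finally `0.9T·(g/d)^r = 0.009·o/d^{1.5r}`
and `1/0.009 < 120`.
-/

open Finset Metric

lemma cellOf_disjoint {d : ℕ} (v : Fin d → ℝ) {g : ℝ} (hg : 0 ≤ g) {t t' : Fin d → ℤ}
    (htt' : t ≠ t') : Disjoint (cellOf d v g t) (cellOf d v g t') := by
  rw [Set.disjoint_left]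
  intro x hx hx'
  obtain ⟨l, hl⟩ := Function.ne_iff.mp htt'
  have not_mem_both {s s' : Fin d → ℤ} (hs : x ∈ cellOf d v g s) (hs' : x ∈ cellOf d v g s')
      (hlt : s l < s' l) : False := by
    have hle : (s l : ℝ) + 1 ≤ s' l := by exact_mod_cast hlt
    have hupper := (hs l).2
    have hlower := (hs' l).1
    nlinarith
  rcases hl.lt_or_gt with hlt | hlt
  · exact not_mem_both hx hx' hlt
  · exact not_mem_both hx' hx hlt

lemma setDist_le_infDist {d : ℕ} {A : Set (Pt d)} (B : Set (Pt d)) {p : Pt d} (hp : p ∈ A) :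
    setDist A B ≤ infDist p B := by
  rcases B.eq_empty_or_nonempty with rfl | hB
  · simp [setDist]
  · refine (le_infDist hB).mpr fun z hz => csInf_le ?_ ⟨p, hp, z, hz, rfl⟩
    exact ⟨0, by rintro _ ⟨a, -, b, -, rfl⟩; exact dist_nonneg⟩

lemma mul_rpow_le_sum_infDist_rpow {d : ℕ} {A B : Set (Pt d)} (Q : Finset (Pt d))
    {k δ r : ℝ} (hδ : 0 ≤ δ) (hr : 0 ≤ r) (hk : k ≤ #(Q.filter (· ∈ A)))
    (hA : δ ≤ setDist A B) :
    k * δ ^ r ≤ ∑ p ∈ Q.filter (· ∈ A), infDist p B ^ r := by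
  have hfar : ∀ p ∈ Q.filter (· ∈ A), δ ^ r ≤ infDist p B ^ r := fun p hp =>
    Real.rpow_le_rpow hδ (hA.trans (setDist_le_infDist B (mem_filter.mp hp).2)) hr
  calc k * δ ^ r ≤ #(Q.filter (· ∈ A)) * δ ^ r := by gcongr
    _ ≤ _ := by simpa [nsmul_eq_mul] using card_nsmul_le_sum _ _ _ hfar

lemma ncard_mul_le_sum_of_pairwiseDisjoint {ι α : Type*} {I : Set ι} {s : ι → Set α}
    (hs : I.PairwiseDisjoint s) (Q : Finset α) {f : α → ℝ} (hf : ∀ p ∈ Q, 0 ≤ f p) {m : ℝ}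
    (hm : ∀ i ∈ I, m ≤ ∑ p ∈ Q.filter (· ∈ s i), f p) :
    I.ncard * m ≤ ∑ p ∈ Q, f p := by
  rcases I.finite_or_infinite with hI | hI
  · have hdisj : (hI.toFinset : Set ι).PairwiseDisjoint (fun i => Q.filter (· ∈ s i)) := by
      intro i hi j hj hij
      simp only [Set.Finite.coe_toFinset] at hi hj
      exact disjoint_filter.mpr fun p _ hp => Set.disjoint_left.mp (hs hi hj hij) hp
    calc I.ncard * m = ∑ _i ∈ hI.toFinset, m := by
          rw [sum_const, nsmul_eq_mul, Set.ncard_eq_toFinset_card I hI]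
      _ ≤ ∑ i ∈ hI.toFinset, ∑ p ∈ Q.filter (· ∈ s i), f p :=
          sum_le_sum fun i hi => hm i (hI.mem_toFinset.mp hi)
      _ = ∑ p ∈ hI.toFinset.biUnion (fun i => Q.filter (· ∈ s i)), f p :=
          (sum_biUnion hdisj).symm
      _ ≤ ∑ p ∈ Q, f p :=
          sum_le_sum_of_subset_of_nonneg (biUnion_subset.mpr fun _ _ => filter_subset _ _)
            fun p hp _ => hf p hp
  · simpa [hI.ncard] using sum_nonneg hf

lemma sqrt_mul_rpow_eq {d g : ℝ} (hd : 0 < d) (hg : 0 ≤ g) (r : ℝ) :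
    (Real.sqrt d * g) ^ r = d ^ (1.5 * r) * (g / d) ^ r := by
  have hd15 : d ^ (1.5 : ℝ) = d * Real.sqrt d := by
    rw [show (1.5 : ℝ) = 1 + 1 / 2 by norm_num, Real.rpow_add hd, Real.rpow_one,
      Real.sqrt_eq_rpow]
  rw [Real.rpow_mul hd.le, ← Real.mul_rpow (by positivity) (by positivity), hd15]
  congr 1
  field_simp

theorem stmt13_general (r : ℝ) (hr : 1 ≤ r) (d : ℕ) (hd : 1 ≤ d)
    (Q : Finset (Pt d)) (Zstar : Finset (Pt d))
    (o g : ℝ) (ho : 0 < o) (hg : 0 < g) (v : Fin d → ℝ)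
    (T : ℝ) (hT : T = 0.01 * o / (Real.sqrt d * g) ^ r) :
    ((Set.ncard {t : Fin d → ℤ |
        0.9 * T ≤ ((Q.filter fun p => p ∈ cellOf d v g t).card : ℝ) ∧
        g / d < setDist (cellOf d v g t) (↑Zstar : Set (Pt d))}) : ℝ) ≤
      120 * (d:ℝ) ^ (1.5 * r) * (∑ p ∈ Q, Metric.infDist p (↑Zstar : Set (Pt d)) ^ r) / o := by
  have hd0 : (0 : ℝ) < d := by exact_mod_cast hd
  have hD : (0 : ℝ) < (d : ℝ) ^ (1.5 * r) := Real.rpow_pos_of_pos hd0 _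
  have hcount := ncard_mul_le_sum_of_pairwiseDisjoint (I := {t |
      0.9 * T ≤ ((Q.filter fun p => p ∈ cellOf d v g t).card : ℝ) ∧
        g / d < setDist (cellOf d v g t) (Zstar : Set (Pt d))})
    (fun t _ t' _ htt' => cellOf_disjoint v hg.le htt') Q
    (fun p _ => Real.rpow_nonneg infDist_nonneg r) (m := 0.9 * T * (g / d) ^ r)
    fun t ht => mul_rpow_le_sum_infDist_rpow Q (by positivity) (by linarith) ht.1 ht.2.le
  have hm : 0.9 * T * (g / d) ^ r = 0.009 * o / (d : ℝ) ^ (1.5 * r) := by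
    rw [hT, sqrt_mul_rpow_eq hd0 hg.le]
    field_simp
    norm_num
  rw [hm, ← mul_div_assoc, div_le_iff₀ hD] at hcount
  have hcost : 0 ≤ (∑ p ∈ Q, infDist p (Zstar : Set (Pt d)) ^ r) * (d : ℝ) ^ (1.5 * r) :=
    mul_nonneg (sum_nonneg fun p _ => Real.rpow_nonneg infDist_nonneg r) hD.le
  rw [le_div_iff₀ ho]
  linarith

/-- **Heavy cells far from the centers are few** (counting step in the proof of
Lemma 3.3): for any grid of disjoint cells of side length `g` and
`T = 0.01·o/(√d·g)^r`, the number of cells containing at least `0.9T` points of `Q`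
and at distance more than `g/d` from `Z*` is at most
`120·d^{1.5r}·(Σ_{p∈Q} dist(p,Z*)^r)/o`. -/
theorem stmt13 (r : ℝ) (hr : 1 ≤ r) (d : ℕ) (hd : 1 ≤ d)
    (Q : Finset (Pt d)) (Zstar : Finset (Pt d)) (hZne : Zstar.Nonempty)
    (o g : ℝ) (ho : 0 < o) (hg : 0 < g) (v : Fin d → ℝ)
    (T : ℝ) (hT : T = 0.01 * o / (Real.sqrt d * g) ^ r) :
    ((Set.ncard {t : Fin d → ℤ |
        0.9 * T ≤ ((Q.filter fun p => p ∈ cellOf d v g t).card : ℝ) ∧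
        g / d < setDist (cellOf d v g t) (↑Zstar : Set (Pt d))}) : ℝ) ≤
      120 * (d:ℝ) ^ (1.5 * r) * (∑ p ∈ Q, Metric.infDist p (↑Zstar : Set (Pt d)) ^ r) / o :=
  stmt13_general r hr d hd Q Zstar o g ho hg v T hT
end

section
/- Let r ≥ 1, let Q' ⊆ ℝ^d be a finite point set with weights w' : Q' → ℝ_{>0}, let Z = {z_1,…,z_k} ⊆ ℝ^d with |Z| = k, and let t' ≥ 0. A fractional assignment is a function f : Q' × Z → ℝ_{≥0} with Σ_{z∈Z} f(p,z) = w'(p) for every p ∈ Q' and Σ_{p∈Q'} f(p,z_i) ≤ t' for every i ∈ [k]; its cost is Σ_{p,z} f(p,z)·dist(p,z)^r. If some fractional assignment exists, then there exists an (integral) assignment π : Q' → Z such that Σ_{p∈Q'} w'(p)·dist(p,π(p))^r is at most the minimum cost over all fractional assignments, and s(π)_i ≤ t' + (k−1)·max_{p∈Q'} w'(p) for every i ∈ [k]. -/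
open scoped Classical

/-!
Among the nonnegative matrices with the same row and column sums as a fractional assignment and
no larger cost, there is one whose support has fewer than `|Q'| + k` entries: a larger support
carries a nonzero matrix with zero row and column sums (a dimension count), and moving along it in
the direction that does not increase the cost until an entry vanishes shrinks the support. Every
point has an entry in the support, so fewer than `k` points are split between several centers.
Sending each point to its cheapest center in the support costs no more than the fractional
assignment, and a center then receives its unsplit points, whose total weight is at most its
fractional load `t'`, plus at most `k - 1` split points. As there are finitely many assignments,
the cheapest one satisfying the size bound costs at most every fractional assignment.
-/

open Finset

section

variable {A B : Type*} [Fintype B]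

noncomputable def rowSupport (g : A → B → ℝ) (p : A) : Finset B := {i | g p i ≠ 0}

lemma exists_neg_of_ne_zero_of_sum_eq_zero {G : A → B → ℝ} (hG : G ≠ 0)
    (hrow : ∀ p, ∑ i, G p i = 0) : ∃ p i, G p i < 0 := by
  by_contra! hnonneg
  exact hG (funext fun p => funext fun i =>
    (sum_eq_zero_iff_of_nonneg fun j _ => hnonneg p j).mp (hrow p) i (mem_univ i))

lemma ite_eq_of_card_rowSupport_le_one [DecidableEq B] {g : A → B → ℝ} {p : A} {j : B}
    (hj : j ∈ rowSupport g p) (hone : #(rowSupport g p) ≤ 1) (i : B) :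
    (if j = i then ∑ l, g p l else 0) = g p i := by
  have hzero (l : B) (hl : l ≠ j) : g p l = 0 := by
    by_contra h
    exact hl (card_le_one.mp hone l (by simpa [rowSupport] using h) j hj)
  split_ifs with h
  · subst h
    exact sum_eq_single j (fun l _ => hzero l) (by simp)
  · exact (hzero i (Ne.symm h)).symm

variable [Fintype A]

noncomputable def entrySupport (g : A → B → ℝ) : Finset (A × B) := {e | g e.1 e.2 ≠ 0}

lemma exists_ne_zero_supported_sums_eq_zero [Nonempty B] (E : Finset (A × B))
    (hE : Fintype.card A + Fintype.card B ≤ #E) :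
    ∃ G : A → B → ℝ, G ≠ 0 ∧ (∀ p i, (p, i) ∉ E → G p i = 0) ∧
      (∀ p, ∑ i, G p i = 0) ∧ ∀ i, ∑ p, G p i = 0 := by
  obtain ⟨i₀⟩ := ‹Nonempty B›
  let extend : (E → ℝ) →ₗ[ℝ] A → B → ℝ :=
    { toFun := fun g p i => if h : (p, i) ∈ E then g ⟨_, h⟩ else 0
      map_add' := fun g h => by ext p i; split_ifs <;> simp [*]
      map_smul' := fun c g => by ext p i; split_ifs <;> simp [*] }
  -- The column sum at `i₀` is determined by the row sums and the other column sums.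
  let sums : (A → B → ℝ) →ₗ[ℝ] (A → ℝ) × ({i // i ≠ i₀} → ℝ) :=
    { toFun := fun G => (fun p => ∑ i, G p i, fun i => ∑ p, G p i)
      map_add' := fun G H => by ext <;> simp [sum_add_distrib]
      map_smul' := fun c G => by ext <;> simp [mul_sum] }
  have hdim : Module.finrank ℝ ((A → ℝ) × ({i // i ≠ i₀} → ℝ)) < Module.finrank ℝ (E → ℝ) := by
    have : Fintype.card {i // i ≠ i₀} + 1 = Fintype.card B := by
      rw [Fintype.card_subtype_compl, Fintype.card_subtype_eq]
      have := Fintype.card_pos (α := B); omega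
    simp only [Module.finrank_prod, Module.finrank_fintype_fun_eq_card, Fintype.card_coe]
    omega
  obtain ⟨g, hg, hg0⟩ := Submodule.exists_mem_ne_zero_of_ne_bot
    (LinearMap.ker_ne_bot_of_finrank_lt (f := sums ∘ₗ extend) hdim)
  obtain ⟨e₀, he₀⟩ := Function.ne_iff.mp hg0
  have hsums := Prod.ext_iff.mp (LinearMap.mem_ker.mp hg)
  have hrow (p : A) : ∑ i, extend g p i = 0 := congrFun hsums.1 p
  have hcol (i : B) (hi : i ≠ i₀) : ∑ p, extend g p i = 0 := congrFun hsums.2 ⟨i, hi⟩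
  refine ⟨extend g, fun h => he₀ ?_, fun p i h => dif_neg h, hrow, fun i => ?_⟩
  · simpa [extend] using congrFun (congrFun h e₀.1.1) e₀.1.2
  · by_cases hi : i = i₀
    · subst hi
      have htotal : ∑ j, ∑ p, extend g p j = 0 := by rw [sum_comm]; simp [hrow]
      rwa [sum_eq_single i (fun j _ hj => hcol j hj) (by simp)] at htotal
    · exact hcol i hi

lemma exists_step_card_entrySupport_lt (g G : A → B → ℝ) (hg : ∀ p i, 0 ≤ g p i)
    (hG : ∀ p i, g p i = 0 → G p i = 0) (hneg : ∃ p i, G p i < 0) :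
    ∃ t : ℝ, 0 ≤ t ∧ (∀ p i, 0 ≤ g p i + t * G p i) ∧
      #(entrySupport fun p i => g p i + t * G p i) < #(entrySupport g) := by
  obtain ⟨p₁, i₁, h₁⟩ := hneg
  obtain ⟨e, he, hmin⟩ := (univ.filter fun e : A × B => G e.1 e.2 < 0).exists_min_image
    (fun e => g e.1 e.2 / -G e.1 e.2) ⟨(p₁, i₁), by simpa using h₁⟩
  simp only [mem_filter, mem_univ, true_and] at he hmin
  refine ⟨g e.1 e.2 / -G e.1 e.2, div_nonneg (hg _ _) (by linarith), fun p i => ?_, ?_⟩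
  · rcases lt_or_ge (G p i) 0 with hpi | hpi
    · have := hmin (p, i) hpi
      rw [le_div_iff₀ (by linarith)] at this
      nlinarith
    · exact add_nonneg (hg p i) (mul_nonneg (div_nonneg (hg _ _) (by linarith)) hpi)
  · refine card_lt_card ⟨fun x hx => ?_, fun hsub => ?_⟩
    · simp only [entrySupport, mem_filter, mem_univ, true_and] at hx ⊢
      intro h0
      simp [h0, hG _ _ h0] at hx
    · have he₂ : e ∈ entrySupport g := by
        simp only [entrySupport, mem_filter, mem_univ, true_and]
        exact fun h0 => (hG _ _ h0 ▸ he).false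
      have := hsub he₂
      simp only [entrySupport, mem_filter, mem_univ, true_and] at this
      exact this (by field_simp [he.ne]; ring)

lemma exists_card_entrySupport_lt [Nonempty B] (C g : A → B → ℝ) (hg : ∀ p i, 0 ≤ g p i) :
    ∃ g' : A → B → ℝ, (∀ p i, 0 ≤ g' p i) ∧ (∀ p, ∑ i, g' p i = ∑ i, g p i) ∧
      (∀ i, ∑ p, g' p i = ∑ p, g p i) ∧
      ∑ p, ∑ i, g' p i * C p i ≤ ∑ p, ∑ i, g p i * C p i ∧
      #(entrySupport g') < Fintype.card A + Fintype.card B := by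
  induction hn : #(entrySupport g) using Nat.strong_induction_on generalizing g with
  | _ n ih =>
  by_cases hsmall : n < Fintype.card A + Fintype.card B
  · exact ⟨g, hg, fun _ => rfl, fun _ => rfl, le_rfl, hn ▸ hsmall⟩
  obtain ⟨G, hG0, hGsupp, hGrow, hGcol, hGcost⟩ : ∃ G : A → B → ℝ, G ≠ 0 ∧
      (∀ p i, g p i = 0 → G p i = 0) ∧ (∀ p, ∑ i, G p i = 0) ∧ (∀ i, ∑ p, G p i = 0) ∧
      ∑ p, ∑ i, G p i * C p i ≤ 0 := by
    obtain ⟨G, hG0, hGsupp, hGrow, hGcol⟩ :=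
      exists_ne_zero_supported_sums_eq_zero (entrySupport g) (by omega)
    have hGsupp' (p i) (h : g p i = 0) : G p i = 0 := hGsupp p i (by simp [entrySupport, h])
    rcases le_total (∑ p, ∑ i, G p i * C p i) 0 with hc | hc
    · exact ⟨G, hG0, hGsupp', hGrow, hGcol, hc⟩
    · refine ⟨-G, neg_ne_zero.mpr hG0, fun p i h => by simp [hGsupp' p i h],
        fun p => by simp [hGrow], fun i => by simp [hGcol], by simpa [sum_neg_distrib]⟩
  obtain ⟨t, ht, hnonneg, hlt⟩ := exists_step_card_entrySupport_lt g G hg hGsupp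
    (exists_neg_of_ne_zero_of_sum_eq_zero hG0 hGrow)
  obtain ⟨g', hg', hrow, hcol, hcost, hcard⟩ := ih _ (hn ▸ hlt) _ hnonneg rfl
  refine ⟨g', hg', fun p => ?_, fun i => ?_, hcost.trans ?_, hcard⟩
  · simp [hrow, sum_add_distrib, ← mul_sum, hGrow]
  · simp [hcol, sum_add_distrib, ← mul_sum, hGcol]
  · have hlin : ∑ p, ∑ i, (g p i + t * G p i) * C p i
        = ∑ p, ∑ i, g p i * C p i + t * ∑ p, ∑ i, G p i * C p i := by
      simp only [add_mul, sum_add_distrib, mul_sum, mul_assoc]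
    rw [hlin]
    nlinarith

lemma sum_card_rowSupport (g : A → B → ℝ) :
    ∑ p, #(rowSupport g p) = #(entrySupport g) := by
  simp only [rowSupport, entrySupport, card_filter, Fintype.sum_prod_type]

lemma card_filter_one_lt_card_rowSupport_lt {g : A → B → ℝ}
    (hrow : ∀ p, (rowSupport g p).Nonempty)
    (hsupp : #(entrySupport g) < Fintype.card A + Fintype.card B) :
    #{p | 1 < #(rowSupport g p)} < Fintype.card B := by
  have hcount : Fintype.card A + #{p | 1 < #(rowSupport g p)} ≤ ∑ p, #(rowSupport g p) := by
    rw [← card_univ, card_eq_sum_ones, card_filter, ← sum_add_distrib]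
    refine sum_le_sum fun p _ => ?_
    have := (hrow p).card_pos
    split_ifs <;> omega
  rw [sum_card_rowSupport] at hcount
  omega

theorem exists_assignment_of_card_entrySupport_lt [DecidableEq B] (C g : A → B → ℝ) {W : ℝ}
    (hg : ∀ p i, 0 ≤ g p i) (hpos : ∀ p, 0 < ∑ i, g p i) (hW0 : 0 ≤ W)
    (hW : ∀ p, ∑ i, g p i ≤ W) (hsupp : #(entrySupport g) < Fintype.card A + Fintype.card B) :
    ∃ π : A → B, ∑ p, (∑ i, g p i) * C p (π p) ≤ ∑ p, ∑ i, g p i * C p i ∧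
      ∀ i, (∑ p, if π p = i then ∑ j, g p j else 0) ≤
        ∑ p, g p i + (Fintype.card B - 1 : ℝ) * W := by
  have hne (p : A) : (rowSupport g p).Nonempty := by
    obtain ⟨i, -, hi⟩ := exists_ne_zero_of_sum_ne_zero (hpos p).ne'
    exact ⟨i, by simpa [rowSupport] using hi⟩
  choose π hπ hπmin using fun p => (rowSupport g p).exists_min_image (C p) (hne p)
  refine ⟨π, sum_le_sum fun p _ => ?_, fun i => ?_⟩
  · rw [sum_mul]
    refine sum_le_sum fun i _ => ?_
    by_cases h : g p i = 0
    · simp [h]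
    · exact mul_le_mul_of_nonneg_left (hπmin p i (by simpa [rowSupport] using h)) (hg p i)
  set S : Finset A := {p | 1 < #(rowSupport g p)}
  have hsplit : ∑ p ∈ S, (if π p = i then ∑ j, g p j else 0) ≤ #S * W := by
    rw [← nsmul_eq_mul]
    exact sum_le_card_nsmul _ _ _ fun p _ => by split_ifs <;> simp [hW, hW0]
  have hsingle : ∑ p ∈ Sᶜ, (if π p = i then ∑ j, g p j else 0) ≤ ∑ p, g p i := by
    rw [sum_congr rfl fun p hp => ite_eq_of_card_rowSupport_le_one (hπ p)
      (by simpa [S] using hp) i]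
    exact sum_le_sum_of_subset_of_nonneg (subset_univ _) fun p _ _ => hg p i
  have hcard : (#S : ℝ) ≤ Fintype.card B - 1 := by
    have := card_filter_one_lt_card_rowSupport_lt hne hsupp
    rw [le_sub_iff_add_le]
    exact_mod_cast this
  rw [← sum_add_sum_compl S]
  nlinarith

theorem exists_assignment_of_fractional [Nonempty B] [DecidableEq B] (C f : A → B → ℝ)
    (w : A → ℝ) {W : ℝ}
    (hf : ∀ p i, 0 ≤ f p i) (hrow : ∀ p, ∑ i, f p i = w p) (hw : ∀ p, 0 < w p)
    (hW0 : 0 ≤ W) (hW : ∀ p, w p ≤ W) :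
    ∃ π : A → B, ∑ p, w p * C p (π p) ≤ ∑ p, ∑ i, f p i * C p i ∧
      ∀ i, (∑ p, if π p = i then w p else 0) ≤ ∑ p, f p i + (Fintype.card B - 1 : ℝ) * W := by
  obtain ⟨g, hg, hgrow, hgcol, hcost, hsupp⟩ := exists_card_entrySupport_lt C f hf
  have hgw (p : A) : ∑ i, g p i = w p := (hgrow p).trans (hrow p)
  obtain ⟨π, hπcost, hπsize⟩ := exists_assignment_of_card_entrySupport_lt C g hg
    (fun p => hgw p ▸ hw p) hW0 (fun p => hgw p ▸ hW p) hsupp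
  simp only [hgw, hgcol] at hπcost hπsize
  exact ⟨π, hπcost.trans hcost, hπsize⟩

end

theorem stmt15_general (r : ℝ) (d k : ℕ) (hk : 1 ≤ k)
    (Q' : Finset (Pt d)) (w' : Pt d → ℝ) (hw' : ∀ p ∈ Q', 0 < w' p)
    (z : Fin k → Pt d)
    (t' : ℝ)
    (hfrac : ∃ f : {p // p ∈ Q'} → Fin k → ℝ, (∀ p i, 0 ≤ f p i) ∧
        (∀ p, ∑ i : Fin k, f p i = w' p.1) ∧
        (∀ i : Fin k, ∑ p ∈ Q'.attach, f p i ≤ t')) :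
    ∃ π : {p // p ∈ Q'} → Fin k,
      (∀ f : {p // p ∈ Q'} → Fin k → ℝ, (∀ p i, 0 ≤ f p i) →
          (∀ p, ∑ i : Fin k, f p i = w' p.1) →
          (∀ i : Fin k, ∑ p ∈ Q'.attach, f p i ≤ t') →
          ∑ p ∈ Q'.attach, w' p.1 * dist p.1 (z (π p)) ^ r ≤
            ∑ p ∈ Q'.attach, ∑ i : Fin k, f p i * dist p.1 (z i) ^ r) ∧
      ∀ i : Fin k, (∑ p ∈ Q'.attach, if π p = i then w' p.1 else 0) ≤
          t' + ((k : ℝ) - 1) * sSup (w' '' (↑Q' : Set (Pt d))) := by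
  have : Nonempty (Fin k) := ⟨⟨0, hk⟩⟩
  simp only [← univ_eq_attach] at hfrac ⊢
  set W := sSup (w' '' (↑Q' : Set (Pt d)))
  set cost : (Q' → Fin k) → ℝ := fun π => ∑ p, w' p.1 * dist p.1 (z (π p)) ^ r
  set balanced : (Q' → Fin k) → Prop :=
    fun π => ∀ i, (∑ p, if π p = i then w' p.1 else 0) ≤ t' + ((k : ℝ) - 1) * W
  have hW (p : Q') : w' p ≤ W := le_csSup (Q'.finite_toSet.image w').bddAbove ⟨p, p.2, rfl⟩
  have hW0 : 0 ≤ W := Real.sSup_nonneg (by rintro _ ⟨p, hp, rfl⟩; exact (hw' p hp).le)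
  have hround (f : Q' → Fin k → ℝ) (hf : ∀ p i, 0 ≤ f p i) (hrow : ∀ p, ∑ i, f p i = w' p)
      (hcol : ∀ i, ∑ p, f p i ≤ t') :
      ∃ π, cost π ≤ ∑ p, ∑ i, f p i * dist p.1 (z i) ^ r ∧ balanced π := by
    obtain ⟨π, hcost, hsize⟩ := exists_assignment_of_fractional (fun p i => dist p.1 (z i) ^ r)
      f (fun p => w' p) hf hrow (fun p => hw' p p.2) hW0 hW
    refine ⟨π, hcost, fun i => (hsize i).trans ?_⟩
    rw [Fintype.card_fin]
    linarith [hcol i]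
  obtain ⟨f, hf, hrow, hcol⟩ := hfrac
  obtain ⟨π₀, -, hπ₀⟩ := hround f hf hrow hcol
  obtain ⟨π, hπ, hmin⟩ :=
    (univ.filter balanced).exists_min_image cost ⟨π₀, mem_filter.mpr ⟨mem_univ _, hπ₀⟩⟩
  refine ⟨π, fun f hf hrow hcol => ?_, (mem_filter.mp hπ).2⟩
  obtain ⟨π', hcost, hπ'⟩ := hround f hf hrow hcol
  exact (hmin π' (mem_filter.mpr ⟨mem_univ _, hπ'⟩)).trans hcost

/-- **Rounding a fractional capacitated assignment** (Section 3.3): if some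
fractional assignment of the weighted points `(Q', w')` to the centers
`Z = {z_1,…,z_k}` with capacity `t'` exists, then there is an integral assignment
`π` whose cost is at most the minimum cost of any fractional assignment, and whose
cluster sizes satisfy `s(π)_i ≤ t' + (k−1)·max_{p∈Q'} w'(p)` for every `i ∈ [k]`. -/
theorem stmt15 (r : ℝ) (hr : 1 ≤ r) (d k : ℕ) (hk : 1 ≤ k)
    (Q' : Finset (Pt d)) (w' : Pt d → ℝ) (hw' : ∀ p ∈ Q', 0 < w' p)
    (z : Fin k → Pt d) (hzinj : Function.Injective z)
    (t' : ℝ) (ht' : 0 ≤ t')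
    (hfrac : ∃ f : {p // p ∈ Q'} → Fin k → ℝ, (∀ p i, 0 ≤ f p i) ∧
        (∀ p, ∑ i : Fin k, f p i = w' p.1) ∧
        (∀ i : Fin k, ∑ p ∈ Q'.attach, f p i ≤ t')) :
    ∃ π : {p // p ∈ Q'} → Fin k,
      (∀ f : {p // p ∈ Q'} → Fin k → ℝ, (∀ p i, 0 ≤ f p i) →
          (∀ p, ∑ i : Fin k, f p i = w' p.1) →
          (∀ i : Fin k, ∑ p ∈ Q'.attach, f p i ≤ t') →
          ∑ p ∈ Q'.attach, w' p.1 * dist p.1 (z (π p)) ^ r ≤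
            ∑ p ∈ Q'.attach, ∑ i : Fin k, f p i * dist p.1 (z i) ^ r) ∧
      ∀ i : Fin k, (∑ p ∈ Q'.attach, if π p = i then w' p.1 else 0) ≤
          t' + ((k : ℝ) - 1) * sSup (w' '' (↑Q' : Set (Pt d))) :=
  stmt15_general r d k hk Q' w' hw' z t' hfrac
end
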